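/- arXiv:2411.06002 — 11 statements merged into one kernel-verified Lean document; each statement's English description precedes it below -/
import Mathlib

section
/- Let λ ≥ 1 and γ ≥ 2 be finite cardinals (natural numbers) and let κ ≥ 1 be a cardinal. The (λ,κ,γ)-hat game is losing if and only if κ ≥ λ·(γ−1)+1. -/
/-!
With `k ≤ λ(γ-1)` colours the logicians win: read the colours as residues mod `k` and hand
each logician at most `γ-1` residues, every residue to someone. Logician `a` guesses the colours
which would put the sum of all hats into one of his residues; the owner of the actual sum is
right.

With `N = λ(γ-1)+1` colours they lose: once the other hats are fixed, logician `a` is right for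
at most `γ-1` of his `N` colours, so he is right on at most `(γ-1)N^(λ-1)` colourings, and the
`λ` logicians together cover at most `(N-1)N^(λ-1) < N^λ` of them. More colours only help the
adversary, since a strategy restricts along an embedding of colour sets.
-/

open Cardinal Set

universe u v

/-- `f` depends on only finitely many coordinates of its argument; this is exactly continuity
with respect to the product topology on `ι → C`, where `C` and `X` carry the discrete topology. -/
def FinDep {ι : Type v} {C : Type u} {X : Type*} (f : (ι → C) → X) : Prop :=
  ∀ h : ι → C, ∃ F : Finset ι, ∀ h' : ι → C, (∀ i ∈ F, h' i = h i) → f h' = f h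

/-- A strategy in the hat game with logicians `L`, colours `C` and `< γ` many guesses:
each logician `a : L` produces a set of fewer than `γ` colours as guesses, where the guess is a
continuous function of the hats of the other logicians (in particular it depends on only finitely
many of the other hats, and never on the logician's own hat). -/
structure HatStrategy (L : Type v) (C : Type u) (γ : Cardinal.{u}) where
  guess : L → (L → C) → Set C
  small : ∀ a h, #(guess a h) < γ
  continuous : ∀ a, FinDep (guess a)
  blind : ∀ a : L, ∀ h h' : L → C, (∀ b, b ≠ a → h b = h' b) → guess a h = guess a h'

/-- A strategy is winning if against every colouring some logician guesses their own colour. -/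
def HatStrategy.IsWinning {L : Type v} {C : Type u} {γ : Cardinal.{u}}
    (S : HatStrategy L C γ) : Prop :=
  ∀ h : L → C, ∃ a, h a ∈ S.guess a h

/-- The hat game with logicians `L`, colours `C` and `< γ` many guesses is winning for the
logicians. -/
def HatWinning (L : Type v) (C : Type u) (γ : Cardinal.{u}) : Prop :=
  ∃ S : HatStrategy L C γ, S.IsWinning

/-- The `(λ, κ, γ)`-hat game is winning: `λ`-many logicians, `κ`-many colours,
`< γ` many guesses. -/
def HatGameWinning (lam κ γ : Cardinal.{u}) : Prop :=
  HatWinning lam.out κ.out γ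

open Finset in
theorem card_filter_mem_le_of_blind {L D : Type*} [Fintype L] [DecidableEq L] [Fintype D]
    [DecidableEq D] (G : (L → D) → Finset D) (a : L) {m : ℕ}
    (hG : ∀ h h' : L → D, (∀ b ≠ a, h b = h' b) → G h = G h')
    (hm : ∀ h, (G h).card ≤ m) :
    (univ.filter fun h : L → D => h a ∈ G h).card ≤
      m * Fintype.card D ^ (Fintype.card L - 1) := by
  let restrict : (L → D) → ({b // b ≠ a} → D) := fun h b => h b
  have agree {h h' : L → D} (hr : restrict h = restrict h') : ∀ b ≠ a, h b = h' b :=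
    fun b hb => congrFun hr ⟨b, hb⟩
  calc (univ.filter fun h : L → D => h a ∈ G h).card
      ≤ m * (univ : Finset ({b // b ≠ a} → D)).card := by
        refine card_le_mul_card_image_of_maps_to (f := restrict) (fun _ _ => mem_univ _) m ?_
        intro r _
        rcases ((univ.filter fun h : L → D => h a ∈ G h).filter
          (restrict · = r)).eq_empty_or_nonempty with hfibre | ⟨h₀, hh₀⟩
        · simp [hfibre]
        simp only [mem_filter] at hh₀
        refine (card_le_card_of_injOn (fun h => h a) ?_ ?_).trans (hm h₀)
        · intro h hh
          simp only [coe_filter, Set.mem_ofPred_eq] at hh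
          simpa [hG h₀ h (agree (hh₀.2.trans hh.2.symm))] using hh.1
        · intro h hh h' hh' hha
          simp only [coe_filter, Set.mem_ofPred_eq] at hh hh'
          funext b
          by_cases hb : b = a
          · subst hb; exact hha
          · exact agree (hh.2.trans hh'.2.symm) b hb
    _ = m * Fintype.card D ^ (Fintype.card L - 1) := by
        simp [Fintype.card_subtype_compl]

open Finset in
theorem exists_forall_notMem_of_blind {L D : Type*} [Fintype L] [DecidableEq L] [Fintype D]
    [DecidableEq D] (G : L → (L → D) → Finset D) {m : ℕ}
    (hG : ∀ a, ∀ h h' : L → D, (∀ b ≠ a, h b = h' b) → G a h = G a h')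
    (hm : ∀ a h, (G a h).card ≤ m) (hcard : Fintype.card L * m < Fintype.card D) :
    ∃ h : L → D, ∀ a, h a ∉ G a h := by
  by_contra! hwin
  set N := Fintype.card D
  set l := Fintype.card L
  have hcover : (univ : Finset (L → D)) ⊆
      univ.biUnion fun a => univ.filter fun h => h a ∈ G a h := fun h _ => by
    simpa using hwin h
  have hcount : N ^ l ≤ l * (m * N ^ (l - 1)) := calc
    N ^ l = (univ : Finset (L → D)).card := by simp [N, l]
    _ ≤ (univ.biUnion fun a => univ.filter fun h : L → D => h a ∈ G a h).card :=
      card_le_card hcover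
    _ ≤ ∑ a, (univ.filter fun h : L → D => h a ∈ G a h).card := card_biUnion_le
    _ ≤ ∑ _a : L, m * N ^ (l - 1) :=
      sum_le_sum fun a _ => card_filter_mem_le_of_blind (G a) a (hG a) (hm a)
    _ = l * (m * N ^ (l - 1)) := by simp [l]
  rcases Nat.eq_zero_or_pos l with hl | hl
  · simp [hl] at hcount
  · have hN : N ^ l = N * N ^ (l - 1) := by rw [← pow_succ']; congr; omega
    rw [hN, ← mul_assoc] at hcount
    exact absurd hcount (not_le.2 (Nat.mul_lt_mul_of_pos_right hcard (pow_pos (by omega) _)))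

theorem not_hatWinning_of_card_lt {L : Type v} {D : Type u} [Fintype L] [Fintype D] {g : ℕ}
    (hcard : Fintype.card L * (g - 1) < Fintype.card D) : ¬ HatWinning L D g := by
  classical
  rintro ⟨S, hS⟩
  have hsmall a h : (S.guess a h).toFinset.card ≤ g - 1 := by
    have := S.small a h
    rw [mk_fintype, Nat.cast_lt] at this
    rw [Set.toFinset_card]
    omega
  obtain ⟨h, hh⟩ := exists_forall_notMem_of_blind (fun a h => (S.guess a h).toFinset)
    (fun a h h' hh => by simp only [S.blind a h h' hh]) hsmall hcard
  obtain ⟨a, ha⟩ := hS h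
  exact hh a (by simpa using ha)

section Comap

variable {L : Type v} {C D : Type u} {γ : Cardinal.{u}}

def HatStrategy.comap (S : HatStrategy L C γ) (ι : D ↪ C) : HatStrategy L D γ where
  guess a h := ι ⁻¹' S.guess a (ι ∘ h)
  small a h := (mk_preimage_of_injective _ _ ι.injective).trans_lt (S.small a (ι ∘ h))
  continuous a h := by
    obtain ⟨F, hF⟩ := S.continuous a (ι ∘ h)
    exact ⟨F, fun h' hh' =>
      congrArg (ι ⁻¹' ·) (hF (ι ∘ h') fun b hb => by simp [hh' b hb])⟩
  blind a h h' hh := by rw [S.blind a (ι ∘ h) (ι ∘ h') fun b hb => by simp [hh b hb]]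

theorem HatStrategy.IsWinning.comap {S : HatStrategy L C γ} (hS : S.IsWinning) (ι : D ↪ C) :
    (S.comap ι).IsWinning :=
  fun h => hS (ι ∘ h)

theorem HatWinning.of_embedding (hwin : HatWinning L C γ) (ι : D ↪ C) : HatWinning L D γ :=
  let ⟨S, hS⟩ := hwin
  ⟨S.comap ι, hS.comap ι⟩

end Comap

theorem not_hatWinning_of_le_mk {L : Type v} {C : Type u} [Finite L] {g : ℕ}
    (hC : ((Nat.card L * (g - 1) + 1 : ℕ) : Cardinal.{u}) ≤ #C) : ¬ HatWinning L C g := by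
  have := Fintype.ofFinite L
  obtain ⟨ι⟩ :=
    (le_def (ULift (Fin (Nat.card L * (g - 1) + 1))) C).1 (by simpa using hC)
  exact fun hwin => not_hatWinning_of_card_lt (by simp [Nat.card_eq_fintype_card])
    (hwin.of_embedding ι)

open Finset in
theorem hatWinning_of_embedding_prod {L : Type v} {C : Type u} {A : Type*} [Fintype L]
    [DecidableEq L] [AddCommGroup A] (e : C ≃ A) {m g : ℕ} (hm : m < g)
    (ι : A ↪ L × Fin m) :
    HatWinning L C g := by
  let others (a : L) (h : L → C) : A := ∑ b ∈ univ.erase a, e (h b)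
  refine ⟨⟨fun a h => {c | (ι (e c + others a h)).1 = a}, fun a h => ?_, fun a h => ?_,
    fun a h h' hh => ?_⟩, fun h => ?_⟩
  · have hinj : Function.Injective
        fun c : {c | (ι (e c + others a h)).1 = a} => (ι (e c + others a h)).2 := by
      rintro ⟨c, hc⟩ ⟨c', hc'⟩ hcc'
      have := ι.injective (Prod.ext (hc.trans hc'.symm) hcc')
      simpa using e.injective (add_right_cancel this)
    have := lift_mk_le_lift_mk_of_injective hinj
    simp only [mk_fintype, Fintype.card_fin, lift_natCast, lift_id'] at this
    exact this.trans_lt (Nat.cast_lt.2 hm)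
  · exact ⟨univ, fun h' hh' => by rw [funext fun b => hh' b (mem_univ b)]⟩
  · have : others a h = others a h' :=
      sum_congr rfl fun b hb => by rw [hh b (ne_of_mem_erase hb)]
    simp only [this]
  · refine ⟨(ι (∑ b, e (h b))).1, ?_⟩
    exact congrArg (fun x => (ι x).1) (add_sum_erase univ (fun b => e (h b)) (mem_univ _))

theorem hatWinning_of_card_le {L : Type v} {C : Type u} [Finite L] [Finite C] [Nonempty C]
    {g : ℕ} (hC : Nat.card C ≤ Nat.card L * (g - 1)) : HatWinning L C g := by
  classical
  have := Fintype.ofFinite L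
  have : NeZero (Nat.card C) := ⟨Nat.card_pos.ne'⟩
  obtain ⟨e⟩ : Nonempty (C ≃ ZMod (Nat.card C)) := Finite.card_eq.1 (by simp)
  obtain ⟨ι⟩ : Nonempty (ZMod (Nat.card C) ↪ L × Fin (g - 1)) :=
    Function.Embedding.nonempty_of_card_le (by simpa [Nat.card_eq_fintype_card] using hC)
  have hg : g - 1 ≠ 0 := right_ne_zero_of_mul (Nat.card_pos.trans_le hC).ne'
  exact hatWinning_of_embedding_prod e (by omega : g - 1 < g) ι

theorem stmt0_general (l g : ℕ) (κ : Cardinal.{u}) (hκ : 1 ≤ κ) :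
    ¬ HatGameWinning (l : Cardinal.{u}) κ (g : Cardinal.{u}) ↔
      ((l * (g - 1) + 1 : ℕ) : Cardinal.{u}) ≤ κ := by
  have hL : #(l : Cardinal.{u}).out = l := mk_out _
  have : Finite (l : Cardinal.{u}).out := lt_aleph0_iff_finite.1 (hL.trans_lt natCast_lt_aleph0)
  have hcardL : Nat.card (l : Cardinal.{u}).out = l := by simp [Nat.card, hL]
  refine ⟨fun hlose => ?_, fun hle => not_hatWinning_of_le_mk (by rwa [hcardL, mk_out])⟩
  by_contra! hlt
  obtain ⟨k, rfl⟩ := lt_aleph0.1 (hlt.trans natCast_lt_aleph0)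
  have : Finite (k : Cardinal.{u}).out := lt_aleph0_iff_finite.1 (by simp)
  have : Nonempty (k : Cardinal.{u}).out :=
    mk_ne_zero_iff.1 (by simpa using (one_pos.trans_le hκ).ne')
  have hk : k < l * (g - 1) + 1 := by exact_mod_cast hlt
  exact hlose (hatWinning_of_card_le (by simp [Nat.card]; omega))

/-- For finite `λ ≥ 1` and `γ ≥ 2` and `κ ≥ 1`, the `(λ,κ,γ)`-hat game is losing iff
`κ ≥ λ·(γ-1)+1`. -/
theorem stmt0 (l g : ℕ) (hl : 1 ≤ l) (hg : 2 ≤ g) (κ : Cardinal.{u}) (hκ : 1 ≤ κ) :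
    ¬ HatGameWinning (l : Cardinal.{u}) κ (g : Cardinal.{u}) ↔
      ((l * (g - 1) + 1 : ℕ) : Cardinal.{u}) ≤ κ :=
  stmt0_general l g κ hκ
end

section
/- Let λ ≥ 1 be a finite cardinal (natural number), let γ be an infinite cardinal and let κ ≥ 1 be a cardinal. The (λ,κ,γ)-hat game is losing if and only if κ ≥ γ^{+(λ−1)}, where γ^{+(λ−1)} denotes the (λ−1)-fold iterated cardinal successor of γ. -/
open Cardinal Set

universe u v

/-! With `n + 1` logicians the game is winning exactly when `#C < γ⁺ⁿ`, by induction on `n`.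
If `γ ≤ #C`, the other logicians can absorb a logician `j`: guessing the union of their guesses
over `γ` possible colours of `j` (one of which `j` misses) wins the game without `j` with `< γ⁺`
guesses. Conversely, if `#C ≤ δ` for an infinite `δ`, well-order `C` so that all initial
segments have fewer than `δ` elements. The logician `j` wearing the largest colour may be
ignored, and everybody else sees `j`'s hat, so they can play a winning strategy of the game
without `j` on the colours below `j`'s hat; by induction one exists when `δ = γ⁺⁽ⁿ⁻¹⁾`. -/

open Order

theorem Nat.card_subtype_ne {α : Type*} [Finite α] (a : α) :
    Nat.card {x // x ≠ a} = Nat.card α - 1 := by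
  have := Fintype.ofFinite α
  classical
  simp [Nat.card_eq_fintype_card, Fintype.card_subtype_compl]

theorem Cardinal.mk_sUnion_lt_of_finite {α : Type u} {γ : Cardinal.{u}} (hγ : ℵ₀ ≤ γ)
    {A : Set (Set α)} (hA : A.Finite) (h : ∀ s ∈ A, #s < γ) : #(⋃₀ A) < γ := by
  induction A, hA using Set.Finite.induction_on with
  | empty => simpa using aleph0_pos.trans_le hγ
  | @insert s A _ _ ih =>
    rw [sUnion_insert]
    exact (mk_union_le _ _).trans_lt <| add_lt_of_lt hγ (h s (mem_insert s A))
      (ih fun t ht => h t (mem_insert_of_mem s ht))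

theorem Cardinal.mk_iUnion_lt_of_finite {ι : Type*} [Finite ι] {α : Type u} {γ : Cardinal.{u}}
    (hγ : ℵ₀ ≤ γ) {f : ι → Set α} (hf : ∀ i, #(f i) < γ) : #(⋃ i, f i) < γ := by
  rw [← sUnion_range]
  exact mk_sUnion_lt_of_finite hγ (finite_range f) (forall_mem_range.2 hf)

theorem Cardinal.exists_linearOrder_mk_Iic_lt {C : Type u} {δ : Cardinal.{u}} (hδ : ℵ₀ ≤ δ)
    (hC : #C ≤ δ) : ∃ _ : LinearOrder C, ∀ c : C, #(Iic c) < δ := by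
  obtain ⟨e⟩ : Nonempty (C ≃ (#C).ord.ToType) := Cardinal.eq.1 (mk_ord_toType _).symm
  let := LinearOrder.lift' e e.injective
  refine ⟨this, fun c => ?_⟩
  have hIio : #(Iio (e c)) < #C := by simpa using mk_Iio_lt (e c)
  calc #(Iic c) ≤ #(Iic (e c)) := mk_preimage_of_injective e _ e.injective
    _ ≤ #(Iio (e c)) + 1 := by rw [← Iio_insert]; exact mk_insert_le
    _ < δ := add_lt_of_lt hδ (hIio.trans_le hC) (one_lt_aleph0.trans_le hδ)

theorem finDep_of_finite {ι : Type v} [Finite ι] {C : Type u} {X : Type*} (f : (ι → C) → X) :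
    FinDep f := by
  have := Fintype.ofFinite ι
  exact fun h => ⟨Finset.univ, fun h' hh' =>
    congrArg f <| funext fun i => hh' i (Finset.mem_univ i)⟩

section HatGame

variable {L : Type v} {C : Type u} {γ : Cardinal.{u}}

def HatStrategy.ofFinite [Finite L] (guess : L → (L → C) → Set C)
    (small : ∀ a h, #(guess a h) < γ)
    (blind : ∀ a h h', (∀ b, b ≠ a → h b = h' b) → guess a h = guess a h') :
    HatStrategy L C γ :=
  ⟨guess, small, fun _ => finDep_of_finite _, blind⟩

theorem not_hatWinning_of_isEmpty [IsEmpty L] : ¬ HatWinning L C γ := fun ⟨_, hS⟩ =>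
  let ⟨a, _⟩ := hS isEmptyElim; isEmptyElim a

theorem hatWinning_of_mk_lt [Finite L] [Nonempty L] (hC : #C < γ) : HatWinning L C γ :=
  ⟨.ofFinite (fun _ _ => univ) (fun _ _ => by rwa [mk_univ]) fun _ _ _ _ => rfl,
    fun _ => ⟨Classical.arbitrary L, mem_univ _⟩⟩

theorem HatWinning.erase [Finite L] (hγ : ℵ₀ ≤ γ) (hC : γ ≤ #C) (j : L)
    (hw : HatWinning L C γ) : HatWinning {i // i ≠ j} C (succ γ) := by
  classical
  obtain ⟨S, hS⟩ := hw
  obtain ⟨A, hA⟩ := le_mk_iff_exists_set.1 hC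
  have : Nonempty C := mk_ne_zero_iff.1 ((aleph0_pos.trans_le (hγ.trans hC)).ne')
  let put (g : {i // i ≠ j} → C) (c : C) : L → C := (Equiv.funSplitAt j C).symm (c, g)
  have put_self (g : {i // i ≠ j} → C) (c : C) : put g c j = c := by simp [put]
  have put_eq (g : {i // i ≠ j} → C) (c : C) (b : L) (hb : b ≠ j) :
      put g c b = g ⟨b, hb⟩ := by
    simp [put, hb]
  refine ⟨.ofFinite (fun a g => ⋃ c ∈ A, S.guess a (put g c)) (fun a g => ?_)
    (fun a g g' hg => ?_), fun g => ?_⟩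
  · refine (mk_biUnion_le _ _).trans_lt (lt_succ_iff.2 ?_)
    calc #A * ⨆ c : A, #(S.guess a (put g c)) ≤ γ * γ :=
          mul_le_mul' hA.le (ciSup_le' fun _ => (S.small _ _).le)
      _ = γ := mul_eq_self hγ
  · refine iUnion₂_congr fun c _ => S.blind a _ _ fun b hb => ?_
    by_cases hbj : b = j
    · rw [hbj, put_self, put_self]
    · rw [put_eq g c b hbj, put_eq g' c b hbj]
      exact hg ⟨b, hbj⟩ fun h => hb (congrArg Subtype.val h)
  · have guess_j (c : C) : S.guess j (put g c) = S.guess j (put g (Classical.arbitrary C)) :=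
      S.blind j _ _ fun b hb => by rw [put_eq g _ b hb, put_eq g _ b hb]
    obtain ⟨c, hcA, hcj⟩ : ∃ c ∈ A, c ∉ S.guess j (put g (Classical.arbitrary C)) :=
      not_subset.1 fun hsub => (S.small _ _).not_ge (hA ▸ mk_le_mk_of_subset hsub)
    obtain ⟨a, ha⟩ := hS (put g c)
    by_cases haj : a = j
    · subst haj
      rw [put_self, guess_j] at ha
      exact (hcj ha).elim
    · rw [put_eq g c a haj] at ha
      exact ⟨⟨a, haj⟩, mem_biUnion hcA ha⟩

theorem hatWinning_of_forall_Iic [LinearOrder C] [Finite L] [Nonempty L] (hγ : ℵ₀ ≤ γ)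
    (hT : ∀ (c : C) (j : L), HatWinning {i // i ≠ j} (Iic c) γ) : HatWinning L C γ := by
  choose T hT using hT
  refine ⟨.ofFinite (fun a h => ⋃ j : {j // j ≠ a}, Subtype.val ''
      (T (h j) j).guess ⟨a, j.2.symm⟩ fun k => projIic (h j) (h k))
    (fun a h => mk_iUnion_lt_of_finite hγ fun j => mk_image_le.trans_lt ((T _ _).small _ _))
    (fun a h h' hh => ?_), fun h => ?_⟩
  · refine iUnion_congr fun j => ?_
    rw [hh j j.2]
    exact congrArg _ <| (T _ _).blind _ _ _ fun b hb =>
      congrArg _ (hh b fun e => hb (Subtype.ext e))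
  · obtain ⟨j, hj⟩ := Finite.exists_max h
    obtain ⟨a, ha⟩ := hT (h j) j fun k => projIic (h j) (h k)
    exact ⟨a, mem_iUnion.2 ⟨⟨j, a.2.symm⟩, _, ha, by simp [projIic_of_mem (hj a)]⟩⟩

end HatGame

theorem HatWinning.mk_lt_iterate_succ {L : Type v} {C : Type u} {γ : Cardinal.{u}}
    (hγ : ℵ₀ ≤ γ) {n : ℕ} (hL : Nat.card L = n + 1) (hw : HatWinning L C γ) : #C < succ^[n] γ := by
  obtain ⟨⟨j⟩, _⟩ : Nonempty L ∧ Finite L := Nat.card_pos_iff.1 (by omega)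
  rcases lt_or_ge #C γ with hCγ | hγC
  · exact hCγ.trans_le (le_succ_iterate n γ)
  have hw' := hw.erase hγ hγC j
  have hcard : Nat.card {i // i ≠ j} = n := by rw [Nat.card_subtype_ne, hL, Nat.add_sub_cancel]
  cases n with
  | zero =>
    have := Finite.card_eq_zero_iff.1 hcard
    exact absurd hw' not_hatWinning_of_isEmpty
  | succ n =>
    rw [Function.iterate_succ_apply]
    exact hw'.mk_lt_iterate_succ (hγ.trans (le_succ γ)) hcard

theorem hatWinning_of_mk_lt_iterate_succ {L : Type v} {C : Type u} {γ : Cardinal.{u}}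
    (hγ : ℵ₀ ≤ γ) {n : ℕ} (hL : Nat.card L = n + 1) (hC : #C < succ^[n] γ) : HatWinning L C γ := by
  obtain ⟨_, _⟩ : Nonempty L ∧ Finite L := Nat.card_pos_iff.1 (by omega)
  cases n with
  | zero => exact hatWinning_of_mk_lt hC
  | succ n =>
    rw [Function.iterate_succ_apply', lt_succ_iff] at hC
    obtain ⟨_, hIic⟩ := exists_linearOrder_mk_Iic_lt (hγ.trans (le_succ_iterate n γ)) hC
    refine hatWinning_of_forall_Iic hγ fun c j =>
      hatWinning_of_mk_lt_iterate_succ hγ ?_ (hIic c)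
    rw [Nat.card_subtype_ne, hL, Nat.add_sub_cancel]

theorem hatWinning_iff_mk_lt_iterate_succ {L : Type v} {C : Type u} {γ : Cardinal.{u}}
    (hγ : ℵ₀ ≤ γ) {n : ℕ} (hL : Nat.card L = n + 1) : HatWinning L C γ ↔ #C < succ^[n] γ :=
  ⟨HatWinning.mk_lt_iterate_succ hγ hL, hatWinning_of_mk_lt_iterate_succ hγ hL⟩

theorem stmt1_general (l : ℕ) (hl : 1 ≤ l) (γ κ : Cardinal.{u}) (hγ : ℵ₀ ≤ γ) :
    ¬ HatGameWinning (l : Cardinal.{u}) κ γ ↔ (Order.succ)^[l - 1] γ ≤ κ := by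
  obtain ⟨n, rfl⟩ := Nat.exists_eq_add_of_le' hl
  have hL : Nat.card ((n + 1 : ℕ) : Cardinal.{u}).out = n + 1 := by
    rw [Nat.card, mk_out, toNat_natCast]
  rw [HatGameWinning, hatWinning_iff_mk_lt_iterate_succ hγ hL, mk_out, not_lt, Nat.add_sub_cancel]

/-- For finite `λ ≥ 1`, infinite `γ` and `κ ≥ 1`, the `(λ,κ,γ)`-hat game is losing iff
`κ ≥ γ⁺⁽λ⁻¹⁾`, the `(λ-1)`-fold iterated cardinal successor of `γ`. -/
theorem stmt1 (l : ℕ) (hl : 1 ≤ l) (γ κ : Cardinal.{u}) (hγ : ℵ₀ ≤ γ) (hκ : 1 ≤ κ) :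
    ¬ HatGameWinning (l : Cardinal.{u}) κ γ ↔ (Order.succ)^[l - 1] γ ≤ κ :=
  stmt1_general l hl γ κ hγ
end

section
/- Let λ be an infinite cardinal, let γ ≥ 2 be a finite cardinal (natural number), and let κ ≥ 1 be a cardinal. The (λ,κ,γ)-hat game is losing if and only if κ is infinite. -/
/-!
With `n ≥ 1` colours, read them as elements of `ZMod n` and let `n` of the logicians bet on the
sum of their `n` hats, one bet per residue: exactly one of them is right.

With infinitely many colours it suffices to use the colours in `ℕ`. Each guess is a locally
constant function of the colouring, so on each compact box `K^L`, `K` finite, it depends on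
finitely many hats, and hence overall on countably many. For countably many logicians
`0, 1, 2, …`, allow logician `n` only `(g + 1) 2^(n+1)` colours, `g` bounding the number of
guesses. If every colouring in this compact box caught some logician, finitely many logicians
would already catch all of it; but logician `n` is right on at most a fraction `2^-(n+1)` of it.
Zorn's lemma glues such countable solutions, along sets closed under dependence, into a colouring
against which every logician guesses wrong.
-/

open Cardinal Set

universe u v

theorem Set.Countable.exists_superset_closed {α : Type*} {s : Set α} (hs : s.Countable)
    (D : α → Set α) (hD : ∀ a, (D a).Countable) :
    ∃ T, T.Countable ∧ s ⊆ T ∧ ∀ a ∈ T, D a ⊆ T := by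
  let step : Set α → Set α := fun u => ⋃ a ∈ u, D a
  have hstep : ∀ n, (step^[n] s).Countable := by
    intro n
    induction n with
    | zero => exact hs
    | succ n ih => rw [Function.iterate_succ_apply']; exact ih.biUnion fun a _ => hD a
  refine ⟨⋃ n, step^[n] s, countable_iUnion hstep, subset_iUnion (fun n => step^[n] s) 0, ?_⟩
  intro a ha b hb
  obtain ⟨n, hn⟩ := mem_iUnion.1 ha
  exact mem_iUnion.2 ⟨n + 1, by rw [Function.iterate_succ_apply']; exact mem_biUnion hn hb⟩

theorem Set.InjOn.exists_subset_graphOn_univ {α β : Type*} [Nonempty β] {Γ : Set (α × β)}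
    (hΓ : InjOn Prod.fst Γ) : ∃ f : α → β, Γ ⊆ univ.graphOn f :=
  let ⟨f, hf⟩ := exists_eq_graphOn_image_fst.2 hΓ
  ⟨f, hf.trans_subset (image_mono (subset_univ _))⟩

namespace Fintype

variable {ι : Type*} [Fintype ι] [DecidableEq ι] {δ : ι → Type*} [∀ i, DecidableEq (δ i)]

theorem card_filter_piFinset_mul_card_le (t : ∀ i, Finset (δ i)) {i : ι} (hti : (t i).Nonempty)
    (C : Set (∀ i, δ i)) [DecidablePred (· ∈ C)] (m : ℕ)
    (hC : ∀ p, #{a | Function.update p i a ∈ C} ≤ m) :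
    ((piFinset t).filter (· ∈ C)).card * (t i).card ≤ m * (piFinset t).card := by
  obtain ⟨a₀, ha₀⟩ := hti
  set Q := (piFinset t).filter (· ∈ C)
  have hfibre : ∀ r ∈ Q.image (Function.update · i a₀),
      (Q.filter fun p => Function.update p i a₀ = r).card ≤ m := by
    intro r _
    have hupdate : ∀ p ∈ Q.filter (Function.update · i a₀ = r), Function.update r i (p i) = p := by
      intro p hp
      rw [← (Finset.mem_filter.1 hp).2, Function.update_idem, Function.update_eq_self]
    have hsub : ((Q.filter (Function.update · i a₀ = r)).image (· i) : Set (δ i)) ⊆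
        {a | Function.update r i a ∈ C} := by
      intro a ha
      obtain ⟨p, hp, rfl⟩ := Finset.mem_image.1 ha
      show Function.update r i (p i) ∈ C
      rw [hupdate p hp]
      exact (Finset.mem_filter.1 (Finset.mem_filter.1 hp).1).2
    rw [← Finset.card_image_of_injOn fun p hp q hq hpq => by
      rw [← hupdate p hp, ← hupdate q hq]; exact congrArg _ hpq]
    exact_mod_cast (mk_coe_finset.symm.trans_le (mk_le_mk_of_subset hsub)).trans (hC r)
  have hslice : Q.image (Function.update · i a₀) ⊆ (piFinset t).filter (· i = a₀) := by
    intro p hp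
    obtain ⟨q, hq, rfl⟩ := Finset.mem_image.1 hp
    refine Finset.mem_filter.2 ⟨mem_piFinset.2 fun j => ?_, Function.update_self ..⟩
    rcases eq_or_ne j i with rfl | hj
    · simpa using ha₀
    · simpa [hj] using mem_piFinset.1 (Finset.mem_filter.1 hq).1 j
  calc Q.card * (t i).card ≤ m * (Q.image (Function.update · i a₀)).card * (t i).card :=
        Nat.mul_le_mul_right _ (Finset.card_le_mul_card_image Q m hfibre)
    _ ≤ m * ((piFinset t).filter (· i = a₀)).card * (t i).card := by gcongr
    _ = m * (piFinset t).card := by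
        rw [card_filter_piFinset_eq_of_mem t i ha₀, card_piFinset, mul_assoc,
          ← Finset.prod_erase_mul _ _ (Finset.mem_univ i)]

theorem exists_mem_piFinset_forall_notMem (t : ∀ i, Finset (δ i)) (ht : ∀ i, (t i).Nonempty)
    (C : ι → Set (∀ i, δ i)) (m : ℕ) (hC : ∀ i p, #{a | Function.update p i a ∈ C i} ≤ m)
    (hsum : ∑ i, (m : ℝ) / (t i).card < 1) :
    ∃ p ∈ piFinset t, ∀ i, p ∉ C i := by
  classical
  by_contra! hcover
  set P := piFinset t
  have hP : (0 : ℝ) < P.card := by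
    exact_mod_cast Finset.card_pos.2 (piFinset_nonempty.2 ht)
  have hunion : P.card ≤ ∑ i, (P.filter (· ∈ C i)).card := by
    refine (Finset.card_le_card fun p hp => ?_).trans Finset.card_biUnion_le
    obtain ⟨i, hi⟩ := hcover p hp
    exact Finset.mem_biUnion.2 ⟨i, Finset.mem_univ i, Finset.mem_filter.2 ⟨hp, hi⟩⟩
  have hslice : ∀ i, ((P.filter (· ∈ C i)).card : ℝ) ≤ m / (t i).card * P.card := fun i => by
    rw [div_mul_eq_mul_div, le_div_iff₀ (by exact_mod_cast (ht i).card_pos)]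
    exact_mod_cast card_filter_piFinset_mul_card_le t (ht i) (C i) m (hC i)
  have hlt := calc (P.card : ℝ) ≤ ∑ i, ((P.filter (· ∈ C i)).card : ℝ) := by exact_mod_cast hunion
    _ ≤ ∑ i, (m : ℝ) / (t i).card * P.card := Finset.sum_le_sum fun i _ => hslice i
    _ = (∑ i, (m : ℝ) / (t i).card) * P.card := (Finset.sum_mul ..).symm
    _ < P.card := by nlinarith
  exact lt_irrefl _ hlt

end Fintype

theorem sum_div_mul_two_pow_lt_one {L : Type*} {s : Finset L} {e : L → ℕ} (he : InjOn e s)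
    (g : ℕ) : ∑ v ∈ s, (g : ℝ) / ((g + 1) * 2 ^ (e v + 1)) < 1 := by
  classical
  have hgeom : ∑ n ∈ s.image e, (1 : ℝ) / 2 / 2 ^ n ≤ 1 :=
    ((summable_geometric_two' 1).sum_le_tsum _ fun _ _ => by positivity).trans_eq
      (tsum_geometric_two' 1)
  calc ∑ v ∈ s, (g : ℝ) / ((g + 1) * 2 ^ (e v + 1))
      = g / (g + 1) * ∑ n ∈ s.image e, (1 : ℝ) / 2 / 2 ^ n := by
        rw [Finset.sum_image he, Finset.mul_sum]
        refine Finset.sum_congr rfl fun v _ => ?_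
        field_simp
        ring
    _ ≤ g / (g + 1) * 1 := by gcongr
    _ < 1 := by
        rw [mul_one, div_lt_one (by positivity)]
        linarith

namespace FinDep

variable {ι α X : Type*} {f : (ι → α) → X}

theorem isLocallyConstant [TopologicalSpace α] [DiscreteTopology α] (hf : FinDep f) :
    IsLocallyConstant f := by
  refine (IsLocallyConstant.iff_exists_open f).2 fun h => ?_
  obtain ⟨F, hF⟩ := hf h
  exact ⟨(F : Set ι).pi fun i => {h i}, isOpen_set_pi F.finite_toSet fun _ _ => isOpen_discrete _,
    by simp, fun h' hh' => hF h' fun i hi => hh' i hi⟩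

theorem exists_finset_support (hf : FinDep f) (K : Finset α) :
    ∃ F : Finset ι, ∀ h h', (∀ i, h i ∈ K) → (∀ i, h' i ∈ K) →
      (∀ i ∈ F, h i = h' i) → f h = f h' := by
  classical
  let _ : TopologicalSpace α := ⊥
  have _ : DiscreteTopology α := ⟨rfl⟩
  choose F hF using hf
  obtain ⟨t, ht⟩ := (isCompact_univ_pi fun _ => K.finite_toSet.isCompact).elim_finite_subcover
    (fun h => (F h : Set ι).pi fun i => {h i})
    (fun h => isOpen_set_pi (F h).finite_toSet fun _ _ => isOpen_discrete _)
    (fun h _ => mem_iUnion.2 ⟨h, by simp⟩)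
  refine ⟨t.biUnion F, fun h h' hK hK' hhh' => ?_⟩
  obtain ⟨h₁, ht₁, hh₁⟩ := mem_iUnion₂.1 (ht (mem_univ_pi.2 hK))
  have hh'₁ : ∀ i ∈ F h₁, h' i = h₁ i := fun i hi =>
    (hhh' i (Finset.mem_biUnion.2 ⟨h₁, ht₁, hi⟩)).symm.trans (hh₁ i hi)
  rw [hF h₁ h fun i hi => hh₁ i hi, hF h₁ h' hh'₁]

theorem exists_countable_support [Countable α] [Nonempty α] (hf : FinDep f) :
    ∃ D : Set ι, D.Countable ∧ ∀ h h', EqOn h h' D → f h = f h' := by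
  classical
  choose F hF using fun K : Finset α => hf.exists_finset_support K
  refine ⟨⋃ K, F K, countable_iUnion fun K => (F K).countable_toSet, fun h h' hD => ?_⟩
  obtain ⟨E, hE⟩ := hf h
  obtain ⟨E', hE'⟩ := hf h'
  -- Off `E ∪ E'` both colourings may be made constant; then they use only finitely many colours.
  let a₀ : α := Classical.arbitrary α
  let cut : (ι → α) → ι → α := fun k i => if i ∈ E ∪ E' then k i else a₀
  let K : Finset α := insert a₀ ((E ∪ E').image h ∪ (E ∪ E').image h')
  have hcut : ∀ k, (∀ i ∈ E ∪ E', k i ∈ K) → ∀ i, cut k i ∈ K := by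
    intro k hk i
    by_cases hi : i ∈ E ∪ E'
    · simpa only [cut, if_pos hi] using hk i hi
    · simp only [cut, if_neg hi, K, Finset.mem_insert_self]
  have hK : ∀ i ∈ E ∪ E', h i ∈ K ∧ h' i ∈ K := fun i hi =>
    ⟨Finset.mem_insert_of_mem (Finset.mem_union_left _ (Finset.mem_image_of_mem h hi)),
      Finset.mem_insert_of_mem (Finset.mem_union_right _ (Finset.mem_image_of_mem h' hi))⟩
  calc f h = f (cut h) := (hE _ fun i hi => if_pos (Finset.mem_union_left _ hi)).symm
    _ = f (cut h') := by
      refine hF K _ _ (hcut h fun i hi => (hK i hi).1) (hcut h' fun i hi => (hK i hi).2)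
        fun i hi => ?_
      simp only [cut]
      split_ifs
      exacts [hD (mem_iUnion.2 ⟨K, hi⟩), rfl]
    _ = f h' := hE' _ fun i hi => if_pos (Finset.mem_union_right _ hi)

end FinDep

theorem hatWinning_of_addCommGroup {L C : Type*} [AddCommGroup C] [Fintype C] {γ : Cardinal}
    (e : C ↪ L) (hγ : 1 < γ) : HatWinning L C γ := by
  classical
  -- Logician `e c` bets that the colours of the logicians `e d` add up to `c`.
  let guess : L → (L → C) → Set C := fun a h =>
    {x | ∃ c, e c = a ∧ x = c - ∑ d ∈ Finset.univ.erase c, h (e d)}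
  have hsum : ∀ a h h', (∀ d, e d ≠ a → h (e d) = h' (e d)) → guess a h = guess a h' := by
    refine fun a h h' hh => Set.ext fun x => exists_congr fun c => and_congr_right fun hc => ?_
    rw [Finset.sum_congr rfl fun d hd => hh d fun hda =>
      (Finset.mem_erase.1 hd).1 (e.injective (hda.trans hc.symm))]
  refine ⟨⟨guess, fun a h => ?_, fun a h => ⟨Finset.univ.map e, fun h' hh' => ?_⟩,
    fun a h h' hh => hsum a h h' fun d hd => hh _ hd⟩, fun h => ?_⟩
  · refine (mk_le_one_iff_set_subsingleton.2 ?_).trans_lt hγ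
    rintro x ⟨c, rfl, rfl⟩ y ⟨c', hc', rfl⟩
    rw [e.injective hc']
  · exact hsum a h' h fun d _ => hh' (e d) (Finset.mem_map_of_mem e (Finset.mem_univ d))
  · refine ⟨e (∑ d, h (e d)), _, rfl, eq_sub_of_add_eq ?_⟩
    exact Finset.add_sum_erase _ (fun d => h (e d)) (Finset.mem_univ _)

theorem hatWinning_of_finite {L C : Type*} [Finite C] [Nonempty C] {γ : Cardinal} (e : C ↪ L)
    (hγ : 1 < γ) : HatWinning L C γ := by
  have : NeZero (Nat.card C) := ⟨Nat.card_pos.ne'⟩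
  let _ := (Finite.equivFin C).addCommGroup
  let _ := Fintype.ofFinite C
  exact hatWinning_of_addCommGroup e hγ

namespace HatStrategy

variable {L : Type*}

theorem isOpen_setOf_mem_guess {C : Type*} [TopologicalSpace C] [DiscreteTopology C]
    {γ : Cardinal} (S : HatStrategy L C γ) (v : L) : IsOpen {h : L → C | h v ∈ S.guess v h} := by
  classical
  have hdep : FinDep fun h : L → C => (h v, S.guess v h) := fun h => by
    obtain ⟨F, hF⟩ := S.continuous v h
    exact ⟨insert v F, fun h' hh' => Prod.ext (hh' v (Finset.mem_insert_self v F))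
      (hF h' fun i hi => hh' i (Finset.mem_insert_of_mem hi))⟩
  exact hdep.isLocallyConstant {p | p.1 ∈ p.2}

variable {g : ℕ}

theorem exists_forall_notMem_guess_of_finset (S : HatStrategy L ℕ g) (A : Finset L)
    (h₀ : L → ℕ) (N : L → ℕ) (hN : ∀ v ∈ A, 0 < N v) (hsum : ∑ v ∈ A, (g : ℝ) / N v < 1) :
    ∃ h : L → ℕ, (∀ v ∉ A, h v = h₀ v) ∧ (∀ v ∈ A, h v < N v) ∧ ∀ v ∈ A, h v ∉ S.guess v h := by
  classical
  let glue : (A → ℕ) → L → ℕ := fun p v => if hv : v ∈ A then p ⟨v, hv⟩ else h₀ v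
  let caught : A → Set (A → ℕ) := fun i => {p | glue p i ∈ S.guess i (glue p)}
  have hglue : ∀ p i a, glue (Function.update p i a) = Function.update (glue p) i a := by
    intro p i a
    funext v
    by_cases hv : v ∈ A
    · by_cases hvi : v = i <;> simp [glue, hv, hvi, Subtype.ext_iff]
    · have : v ≠ i := fun h => hv (h ▸ i.2)
      simp [glue, hv, this]
  have hfibre : ∀ i p, #{a | Function.update p i a ∈ caught i} ≤ g := by
    intro i p
    have hsub : {a | Function.update p i a ∈ caught i} ⊆ S.guess i (glue p) := by
      intro a ha
      simp only [caught, mem_ofPred_eq, hglue, Function.update_self] at ha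
      rwa [S.blind i _ (glue p) fun b hb => Function.update_of_ne hb _ _] at ha
    exact (mk_le_mk_of_subset hsub).trans (S.small i _).le
  obtain ⟨p, hp, hpC⟩ := Fintype.exists_mem_piFinset_forall_notMem
    (fun i : A => Finset.range (N i)) (fun i => Finset.nonempty_range_iff.2 (hN i i.2).ne')
    caught g hfibre
    (by simpa only [Finset.card_range, Finset.sum_coe_sort A fun v => (g : ℝ) / N v] using hsum)
  refine ⟨glue p, fun v hv => dif_neg hv, fun v hv => ?_, fun v hv => ?_⟩
  · simpa [glue, hv] using Fintype.mem_piFinset.1 hp ⟨v, hv⟩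
  · simpa [glue, caught, hv] using hpC ⟨v, hv⟩

theorem exists_eqOn_compl_forall_notMem_guess (S : HatStrategy L ℕ g) {B : Set L}
    (hB : B.Countable) (h₀ : L → ℕ) : ∃ h : L → ℕ, EqOn h h₀ Bᶜ ∧ ∀ v ∈ B, h v ∉ S.guess v h := by
  classical
  obtain ⟨e, he⟩ := countable_iff_exists_injOn.1 hB
  -- With `N v` colours, logician `v` is right on at most a fraction `2 ^ -(e v + 1)` of any box.
  let N : L → ℕ := fun v => (g + 1) * 2 ^ (e v + 1)
  let box : Set (L → ℕ) := univ.pi fun v => if v ∈ B then Iio (N v) else {h₀ v}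
  have hbox : IsCompact box := isCompact_univ_pi fun v => by
    split_ifs
    exacts [(finite_Iio _).isCompact, isCompact_singleton]
  have hbox_eqOn : ∀ h ∈ box, EqOn h h₀ Bᶜ := fun h hh v hv => by
    simpa only [if_neg hv, mem_singleton_iff] using hh v (mem_univ v)
  by_contra! hcaught
  obtain ⟨A, hAB, hA, hcover⟩ := hbox.elim_finite_subcover_image
    (fun v _ => S.isOpen_setOf_mem_guess v) fun h hh =>
      let ⟨v, hv, hvh⟩ := hcaught h (hbox_eqOn h hh); mem_iUnion₂.2 ⟨v, hv, hvh⟩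
  obtain ⟨h, hhA, hhN, hhA'⟩ := S.exists_forall_notMem_guess_of_finset hA.toFinset
    (B.piecewise 0 h₀) N (fun v _ => by positivity)
    (by simpa [N] using sum_div_mul_two_pow_lt_one (he.mono (by simpa using hAB)) g)
  have hbox_h : h ∈ box := fun v _ => by
    by_cases hvA : v ∈ A
    · simp [hAB hvA, hhN v (hA.mem_toFinset.2 hvA)]
    · rw [hhA v (by simpa using hvA)]
      by_cases hvB : v ∈ B <;> simp [hvB, N]
  obtain ⟨v, hv, hvh⟩ := mem_iUnion₂.1 (hcover hbox_h)
  exact hhA' v (hA.mem_toFinset.2 hv) hvh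

/-- Partial colourings are encoded by their graphs, so that a chain of them has its union as an
upper bound. -/
def Fools {C : Type*} {γ : Cardinal} (S : HatStrategy L C γ) (Γ : Set (L × C)) : Prop :=
  InjOn Prod.fst Γ ∧ ∀ v ∈ Prod.fst '' Γ, ∀ h, Γ ⊆ univ.graphOn h → h v ∉ S.guess v h

theorem Fools.sUnion {C : Type*} {γ : Cardinal} {S : HatStrategy L C γ}
    {c : Set (Set (L × C))} (hc : IsChain (· ⊆ ·) c) (hS : ∀ Γ ∈ c, S.Fools Γ) :
    S.Fools (⋃₀ c) := by
  refine ⟨?_, ?_⟩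
  · rintro p ⟨Γ₁, hΓ₁, hp⟩ q ⟨Γ₂, hΓ₂, hq⟩ hpq
    rcases hc.total hΓ₁ hΓ₂ with h | h
    exacts [(hS Γ₂ hΓ₂).1 (h hp) hq hpq, (hS Γ₁ hΓ₁).1 hp (h hq) hpq]
  · rintro v ⟨p, ⟨Γ, hΓ, hp⟩, rfl⟩ h hh
    exact (hS Γ hΓ).2 p.1 (mem_image_of_mem _ hp) h ((subset_sUnion_of_mem hΓ).trans hh)

theorem Fools.exists_superset {S : HatStrategy L ℕ g} {Γ : Set (L × ℕ)} (hΓ : S.Fools Γ) (x : L) :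
    ∃ Γ', Γ ⊆ Γ' ∧ S.Fools Γ' ∧ x ∈ Prod.fst '' Γ' := by
  choose D hDc hD using fun v => (S.continuous v).exists_countable_support
  obtain ⟨T, hTc, hxT, hTD⟩ := (countable_singleton x).exists_superset_closed D hDc
  obtain ⟨h₀, hh₀⟩ := hΓ.1.exists_subset_graphOn_univ
  set B := T \ Prod.fst '' Γ
  obtain ⟨k, hk₀, hk⟩ := S.exists_eqOn_compl_forall_notMem_guess (hTc.mono sdiff_subset) h₀
  have hΓk : Γ ∪ B.graphOn k ⊆ univ.graphOn k := by
    refine union_subset (fun p hp => ?_) (image_mono (subset_univ B))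
    have hpB : p.1 ∉ B := fun hpB => hpB.2 (mem_image_of_mem _ hp)
    exact mem_graphOn.2 ⟨mem_univ _, (hk₀ hpB).trans (mem_graphOn.1 (hh₀ hp)).2⟩
  have hdom : Prod.fst '' (Γ ∪ B.graphOn k) = Prod.fst '' Γ ∪ B := by
    rw [image_union, image_fst_graphOn]
  have hT : T ⊆ Prod.fst '' (Γ ∪ B.graphOn k) := by
    rw [hdom]
    exact fun v hv => (em _).imp_right fun hvΓ => ⟨hv, hvΓ⟩
  refine ⟨Γ ∪ B.graphOn k, subset_union_left, ⟨fst_injOn_graph.mono hΓk, ?_⟩, hT (hxT rfl)⟩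
  intro v hv h hh
  rw [hdom] at hv
  rcases hv with hv | hv
  · exact hΓ.2 v hv h (subset_union_left.trans hh)
  · have hhk : EqOn h k T := fun w hw => by
      obtain ⟨p, hp, rfl⟩ := hT hw
      exact (mem_graphOn.1 (hh hp)).2.trans (mem_graphOn.1 (hΓk hp)).2.symm
    rw [hhk hv.1, hD v h k (hhk.mono (hTD v hv.1))]
    exact hk v hv

theorem exists_forall_notMem_guess (S : HatStrategy L ℕ g) :
    ∃ h : L → ℕ, ∀ v, h v ∉ S.guess v h := by
  obtain ⟨Γ, hΓ⟩ := zorn_subset {Γ | S.Fools Γ} fun c hcS hc =>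
    ⟨⋃₀ c, Fools.sUnion hc hcS, fun _ => subset_sUnion_of_mem⟩
  have hdom : ∀ v, v ∈ Prod.fst '' Γ := fun v => by
    obtain ⟨Γ', hΓΓ', hΓ', hv⟩ := hΓ.prop.exists_superset v
    rwa [← hΓ.eq_of_subset hΓ' hΓΓ'] at hv
  obtain ⟨h, hh⟩ := hΓ.prop.1.exists_subset_graphOn_univ
  exact ⟨h, fun v => hΓ.prop.2 v (hdom v) h hh⟩

def comap_s2 {C C' : Type*} (S : HatStrategy L C g) (c : C' ↪ C) : HatStrategy L C' g where
  guess v h := c ⁻¹' S.guess v (c ∘ h)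
  small v h := lift_lt_nat_iff.1 <| (mk_preimage_of_injective_lift c _ c.injective).trans_lt
    (lift_lt_nat_iff.2 (S.small v (c ∘ h)))
  continuous v h := by
    obtain ⟨F, hF⟩ := S.continuous v (c ∘ h)
    exact ⟨F, fun h' hh' => congrArg _ (hF _ fun i hi => congrArg c (hh' i hi))⟩
  blind v h h' hhh' := congrArg _ (S.blind v _ _ fun b hb => congrArg c (hhh' b hb))

theorem IsWinning.comap_s2 {C C' : Type*} {S : HatStrategy L C g} (hS : S.IsWinning) (c : C' ↪ C) :
    (S.comap_s2 c).IsWinning := fun h => hS (c ∘ h)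

theorem not_isWinning_of_infinite {C : Type*} [Infinite C] (S : HatStrategy L C g) :
    ¬ S.IsWinning := fun hS =>
  let ⟨h, hh⟩ := (S.comap_s2 (Infinite.natEmbedding C)).exists_forall_notMem_guess
  let ⟨v, hv⟩ := hS.comap_s2 (Infinite.natEmbedding C) h
  hh v hv

end HatStrategy

/-- For infinite `λ`, finite `γ ≥ 2` and `κ ≥ 1`, the `(λ,κ,γ)`-hat game is losing iff
`κ` is infinite. -/
theorem stmt2 (lam : Cardinal.{u}) (hlam : ℵ₀ ≤ lam) (g : ℕ) (hg : 2 ≤ g)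
    (κ : Cardinal.{u}) (hκ : 1 ≤ κ) :
    ¬ HatGameWinning lam κ (g : Cardinal.{u}) ↔ ℵ₀ ≤ κ := by
  constructor
  · intro hlose
    by_contra! hfin
    have : Finite κ.out := lt_aleph0_iff_finite.1 (by rwa [mk_out])
    have : Nonempty κ.out :=
      mk_ne_zero_iff.1 (by rw [mk_out]; exact Cardinal.one_le_iff_ne_zero.1 hκ)
    obtain ⟨e⟩ : Nonempty (κ.out ↪ lam.out) := by
      rw [← le_def, mk_out, mk_out]
      exact hfin.le.trans hlam
    exact hlose (hatWinning_of_finite e (by exact_mod_cast hg))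
  · rintro hinf ⟨S, hS⟩
    have : Infinite κ.out := infinite_iff.2 (by rwa [mk_out])
    exact S.not_isWinning_of_infinite hS
end

section
/- For every nonempty set A there exists a family of functions ⟨g_n : n < ω⟩ with g_n : A^(ω∖{n}) → A such that for every h : ω → A, the set {n < ω : g_n(h restricted to ω∖{n}) ≠ h(n)} is finite; that is, all but finitely many logicians guess their own hat colour correctly when each sees all other hats. -/
open Set Filter Function

/-!
Choose, by the axiom of choice, a representative of every class of colourings modulo finite
change. Logician `i` cannot see `h i`, but any colouring agreeing with what he sees differs from
`h` in at most one place, so it has the same representative `r`; he guesses `r i`. Since `r`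
differs from `h` at only finitely many places, only finitely many logicians guess wrong.
-/

section

variable {ι A : Type*}

noncomputable def cofiniteRep (h : ι → A) : ι → A :=
  Quotient.out (s := cofinite.germSetoid A) (h : Germ cofinite A)

theorem cofiniteRep_eventuallyEq (h : ι → A) : cofiniteRep h =ᶠ[cofinite] h :=
  Quotient.mk_out (s := cofinite.germSetoid A) h

theorem cofiniteRep_congr {h h' : ι → A} (hh' : h =ᶠ[cofinite] h') :
    cofiniteRep h = cofiniteRep h' :=
  congrArg (Quotient.out (s := cofinite.germSetoid A)) (Germ.coe_eq.2 hh')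

theorem finite_setOf_cofiniteRep_ne (h : ι → A) : {i | cofiniteRep h i ≠ h i}.Finite :=
  eventually_cofinite.1 (cofiniteRep_eventuallyEq h)

open Classical in
noncomputable def extendAt (i : ι) (a : A) (f : {j // j ≠ i} → A) : ι → A :=
  fun j => if hj : j = i then a else f ⟨j, hj⟩

open Classical in
theorem extendAt_restrict (h : ι → A) (i : ι) (a : A) :
    extendAt i a (fun j => h j.1) = update h i a := by
  ext j
  by_cases hj : j = i
  · subst hj; simp [extendAt]
  · simp [extendAt, hj]

/-- `fill i f` is only a placeholder for the unseen hat `i`; any choice works. -/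
noncomputable def cofiniteGuess (fill : ∀ i : ι, ({j // j ≠ i} → A) → A) (i : ι)
    (f : {j // j ≠ i} → A) : A :=
  cofiniteRep (extendAt i (fill i f) f) i

theorem cofiniteGuess_restrict (fill : ∀ i : ι, ({j // j ≠ i} → A) → A) (h : ι → A) (i : ι) :
    cofiniteGuess fill i (fun j => h j.1) = cofiniteRep h i := by
  classical
  rw [cofiniteGuess, extendAt_restrict, cofiniteRep_congr (update_eventuallyEq_cofinite h i _)]

theorem finite_setOf_cofiniteGuess_ne (fill : ∀ i : ι, ({j // j ≠ i} → A) → A) (h : ι → A) :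
    {i | cofiniteGuess fill i (fun j => h j.1) ≠ h i}.Finite := by
  simpa only [cofiniteGuess_restrict] using finite_setOf_cofiniteRep_ne h

end

theorem stmt5_general (A : Type*) :
    ∃ g : (n : ℕ) → ({m : ℕ // m ≠ n} → A) → A,
      ∀ h : ℕ → A, {n : ℕ | g n (fun m => h m.1) ≠ h n}.Finite :=
  ⟨cofiniteGuess fun n f => f ⟨n + 1, n.succ_ne_self⟩, finite_setOf_cofiniteGuess_ne _⟩

/-- Gabay–O'Connor: for any nonempty set of colours `A` there are guessing functions
`g n : A^(ω \\ {n}) → A` such that for every colouring `h : ω → A`, all but finitely many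
logicians guess their own hat colour correctly. -/
theorem stmt5 (A : Type*) [Nonempty A] :
    ∃ g : (n : ℕ) → ({m : ℕ // m ≠ n} → A) → A,
      ∀ h : ℕ → A, {n : ℕ | g n (fun m => h m.1) ≠ h n}.Finite :=
  stmt5_general A
end

section
/- Let κ and γ be infinite cardinals. Then κ has the γ-MInA if and only if for every countable set ℱ of continuous functions f : κ^ω → [κ]^{<γ} (where κ and [κ]^{<γ} carry the discrete topology and κ^ω the product topology) there is a countably infinite set A ⊆ κ such that for every α ∈ A, every f ∈ ℱ and every sequence s ∈ (A∖{α})^ω one has α ∉ f(s). -/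
/-!
A continuous function on `κ^ω` depends only on a finite initial segment of its argument, so it
is recovered from the countably many finitary functions `x ↦ f (x₀, …, xₙ, xₙ, xₙ, …)`; conversely
a finitary function is a continuous function of the whole sequence. Independence transfers along
both translations; in the second, a finite tuple from `A \ {α}` is padded into a sequence with
another element of `A \ {α}`, which exists because `A` is infinite.
-/

open Cardinal Set

universe u v

/-- The canonical type of `κ`-many colours: the ordinals below `κ.ord`,
equipped with their natural linear order. -/
abbrev HatColour (κ : Cardinal.{u}) : Type u := κ.ord.ToType

/-- `A` is mutually `F`-independent: no `α ∈ A` lies in a value of a function of the countable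
family `F` applied to arguments from `A \\ {α}`. -/
def MutuallyIndep {O : Type u} (F : ℕ → Σ n : ℕ, (Fin n → O) → Set O) (A : Set O) : Prop :=
  ∀ α ∈ A, ∀ i : ℕ, ∀ x : Fin (F i).1 → O, (∀ j, x j ∈ A \ {α}) → α ∉ (F i).2 x

/-- `κ` has the `γ`-MInA: for every countable family of finitary functions
`f : κ^n → [κ]^{<γ}` there is a countably infinite mutually independent subset of `κ`. -/
def MInA (κ γ : Cardinal.{u}) : Prop :=
  ∀ F : ℕ → Σ n : ℕ, (Fin n → HatColour κ) → Set (HatColour κ),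
    (∀ i x, #((F i).2 x) < γ) →
    ∃ A : Set (HatColour κ), A.Countable ∧ A.Infinite ∧ MutuallyIndep F A

/-- `κ` is strongly MInA: it has the `γ`-MInA for every infinite cardinal `γ < κ`. -/
def StronglyMInA (κ : Cardinal.{u}) : Prop :=
  ∀ γ : Cardinal.{u}, ℵ₀ ≤ γ → γ < κ → MInA κ γ

theorem FinDep.exists_apply_comp_min_eq {C X : Type*} {f : (ℕ → C) → X} (hf : FinDep f)
    (s : ℕ → C) : ∃ n, f (fun j => s (min j n)) = f s := by
  obtain ⟨D, hD⟩ := hf s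
  refine ⟨D.sup id, hD _ fun j hj => ?_⟩
  rw [min_eq_left (show j ≤ D.sup id from Finset.le_sup (f := id) hj)]

theorem finDep_comp_val {C X : Type*} {n : ℕ} (g : (Fin n → C) → X) :
    FinDep fun s : ℕ → C => g (s ∘ Fin.val) := fun _ =>
  ⟨Finset.range n, fun _ hs' => congrArg g <| funext fun j => hs' j (Finset.mem_range.2 j.isLt)⟩

section Independence

variable {O : Type u}

def SeqIndep (F : ℕ → (ℕ → O) → Set O) (A : Set O) : Prop :=
  ∀ α ∈ A, ∀ i : ℕ, ∀ s : ℕ → O, (∀ j, s j ∈ A \ {α}) → α ∉ F i s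

/-- The member with index `Nat.pair i n` is `F i` evaluated on tuples of length `n + 1`,
extended to sequences by repeating the last entry. -/
def truncations (F : ℕ → (ℕ → O) → Set O) : ℕ → Σ n : ℕ, (Fin n → O) → Set O := fun k =>
  ⟨k.unpair.2 + 1, fun x => F k.unpair.1 fun j => x ⟨min j k.unpair.2, by omega⟩⟩

def sequentialize (F : ℕ → Σ n : ℕ, (Fin n → O) → Set O) : ℕ → (ℕ → O) → Set O :=
  fun i s => (F i).2 (s ∘ Fin.val)

theorem SeqIndep.of_mutuallyIndep_truncations {F : ℕ → (ℕ → O) → Set O} {A : Set O}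
    (hF : ∀ i, FinDep (F i)) (hA : MutuallyIndep (truncations F) A) : SeqIndep F A := by
  intro α hα i s hs
  obtain ⟨n, hn⟩ := (hF i).exists_apply_comp_min_eq s
  have h := hA α hα (Nat.pair i n)
  simp only [truncations, Nat.unpair_pair] at h
  exact hn ▸ h (fun j => s j) fun j => hs j

theorem SeqIndep.mutuallyIndep {F : ℕ → Σ n : ℕ, (Fin n → O) → Set O} {A : Set O}
    (hA : A.Infinite) (h : SeqIndep (sequentialize F) A) : MutuallyIndep F A := by
  intro α hα i x hx
  obtain ⟨β, hβ⟩ := (hA.sdiff (finite_singleton α)).nonempty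
  let s : ℕ → O := fun j => if hj : j < (F i).1 then x ⟨j, hj⟩ else β
  have hs : ∀ j, s j ∈ A \ {α} := fun j => by
    by_cases hj : j < (F i).1
    · simpa [s, hj] using hx ⟨j, hj⟩
    · simpa [s, hj] using hβ
  have hsx : s ∘ Fin.val = x := funext fun j => by simp [s, j.isLt]
  simpa only [sequentialize, hsx] using h α hα i s hs

end Independence

theorem stmt7_general (κ γ : Cardinal.{u}) :
    MInA κ γ ↔
      ∀ F : ℕ → (ℕ → HatColour κ) → Set (HatColour κ),
        (∀ i, FinDep (F i)) → (∀ i s, #(F i s) < γ) →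
        ∃ A : Set (HatColour κ), A.Countable ∧ A.Infinite ∧
          ∀ α ∈ A, ∀ i : ℕ, ∀ s : ℕ → HatColour κ,
            (∀ j, s j ∈ A \ {α}) → α ∉ F i s := by
  constructor
  · intro h F hF hcard
    obtain ⟨A, hAc, hAi, hA⟩ := h (truncations F) fun _ _ => hcard _ _
    exact ⟨A, hAc, hAi, SeqIndep.of_mutuallyIndep_truncations hF hA⟩
  · intro h F hcard
    obtain ⟨A, hAc, hAi, hA⟩ :=
      h (sequentialize F) (fun _ => finDep_comp_val _) fun _ _ => hcard _ _
    exact ⟨A, hAc, hAi, SeqIndep.mutuallyIndep hAi hA⟩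

/-- For infinite `κ` and `γ`: `κ` has the `γ`-MInA iff for every countable family of continuous
functions `f : κ^ω → [κ]^{<γ}` there is a countably infinite set `A ⊆ κ` such that no `α ∈ A`
lies in the value of any `f` on any sequence drawn from `A \\ {α}`. -/
theorem stmt7 (κ γ : Cardinal.{u}) (hκ : ℵ₀ ≤ κ) (hγ : ℵ₀ ≤ γ) :
    MInA κ γ ↔
      ∀ F : ℕ → (ℕ → HatColour κ) → Set (HatColour κ),
        (∀ i, FinDep (F i)) → (∀ i s, #(F i s) < γ) →
        ∃ A : Set (HatColour κ), A.Countable ∧ A.Infinite ∧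
          ∀ α ∈ A, ∀ i : ℕ, ∀ s : ℕ → HatColour κ,
            (∀ j, s j ∈ A \ {α}) → α ∉ F i s :=
  stmt7_general κ γ
end

section
/- Let κ ≥ 1 be a cardinal and γ an infinite cardinal. Suppose there is a sequence ⟨τ^N : N < ω⟩ of strategies in the (ω,κ,γ)-hat game such that for every h : ω → κ there exist N < ω and i < ω with h(i) ∈ τ^N_i(h restricted to ω∖{i}). Then the (ω,κ,γ)-hat game is winning. -/
open Cardinal Set

universe u v

/-!
Let `catchRank h` be the least `k` such that some `τ N` with `N ≤ k` catches `h` at a position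
`≤ k`; it depends on only finitely many hats. In the merged strategy logician `i` plays every
`τ N` with `N` at most the catch rank of the hats beyond `i`, on every tail of the colouring
starting at some `s ≤ i`: finitely many guesses of size `< γ`. Given `h`, pick the tail start `s`
of least catch rank and let `τ N` catch that tail at position `j`. The tail beyond `s + j` has
catch rank at least that of the tail at `s`, so `N` is within the bound of logician `s + j`, who
therefore guesses correctly.
-/

namespace FinDep

variable {ι ι' C X Y : Type*}

theorem comp {f : (ι → C) → X} (hf : FinDep f) (φ : X → Y) : FinDep (φ ∘ f) := fun h =>
  (hf h).imp fun _ hF h' hh' => congrArg φ (hF h' hh')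

theorem eval (i : ι) : FinDep fun h : ι → C => h i := fun _ =>
  ⟨{i}, fun _ hh' => hh' i (Finset.mem_singleton_self i)⟩

theorem prodMk {f : (ι → C) → X} {g : (ι → C) → Y} (hf : FinDep f) (hg : FinDep g) :
    FinDep fun h => (f h, g h) := by
  classical
  intro h
  obtain ⟨A, hA⟩ := hf h
  obtain ⟨B, hB⟩ := hg h
  exact ⟨A ∪ B, fun h' hh' => Prod.ext (hA h' fun i hi => hh' i (Finset.mem_union_left _ hi))
    (hB h' fun i hi => hh' i (Finset.mem_union_right _ hi))⟩

theorem precomp {f : (ι → C) → X} (hf : FinDep f) (e : ι → ι') :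
    FinDep fun h : ι' → C => f (h ∘ e) := by
  classical
  intro h
  obtain ⟨F, hF⟩ := hf (h ∘ e)
  exact ⟨F.image e, fun h' hh' =>
    hF (h' ∘ e) fun i hi => hh' (e i) (Finset.mem_image_of_mem e hi)⟩

theorem of_finset {α : Type*} {f : α → (ι → C) → Y} {g : (ι → C) → X}
    (t : (ι → C) → Finset α) (hf : ∀ a, FinDep (f a))
    (hg : ∀ h h', (∀ a ∈ t h, f a h' = f a h) → g h' = g h) : FinDep g := by
  classical
  intro h
  choose F hF using fun a => hf a h
  exact ⟨(t h).biUnion F, fun h' hh' => hg h h' fun a ha =>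
    hF a h' fun i hi => hh' i (Finset.mem_biUnion.2 ⟨a, ha, hi⟩)⟩

theorem bind {α : Type*} {n : (ι → C) → α} {F : α → (ι → C) → X} (hn : FinDep n)
    (hF : ∀ a, FinDep (F a)) : FinDep fun h => F (n h) h := by
  classical
  intro h
  obtain ⟨A, hA⟩ := hn h
  obtain ⟨B, hB⟩ := hF (n h) h
  refine ⟨A ∪ B, fun h' hh' => ?_⟩
  show F (n h') h' = F (n h) h
  rw [hA h' fun i hi => hh' i (Finset.mem_union_left _ hi)]
  exact hB h' fun i hi => hh' i (Finset.mem_union_right _ hi)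

theorem nat_find {P : (ι → C) → ℕ → Prop} [∀ h, DecidablePred (P h)]
    (hP : ∀ k, FinDep (P · k)) (hex : ∀ h, ∃ k, P h k) : FinDep fun h => Nat.find (hex h) :=
  of_finset (fun h => Finset.range (Nat.find (hex h) + 1)) hP fun h h' hh' => by
    have hiff : ∀ m ≤ Nat.find (hex h), P h' m ↔ P h m := fun m hm =>
      Eq.to_iff (hh' m (Finset.mem_range.2 (Nat.lt_succ_of_le hm)))
    rw [Nat.find_eq_iff]
    exact ⟨(hiff _ le_rfl).2 (Nat.find_spec (hex h)), fun m hm hPm =>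
      Nat.find_min (hex h) hm ((hiff m hm.le).1 hPm)⟩

end FinDep

theorem mk_biUnion_finset_lt {α C : Type*} {γ : Cardinal} (hγ : ℵ₀ ≤ γ) (t : Finset α)
    {f : α → Set C} (hf : ∀ a ∈ t, #(f a) < γ) : #(⋃ a ∈ t, f a) < γ := by
  classical
  induction t using Finset.induction_on with
  | empty => simpa using aleph0_pos.trans_le hγ
  | insert a t _ ih =>
    rw [Finset.set_biUnion_insert]
    exact (mk_union_le _ _).trans_lt (add_lt_of_lt hγ (hf a (Finset.mem_insert_self a t))
      (ih fun b hb => hf b (Finset.mem_insert_of_mem hb)))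

namespace HatStrategy

variable {C : Type*} {γ : Cardinal} (τ : ℕ → HatStrategy ℕ C γ)

def CatchesWithin (k : ℕ) (h : ℕ → C) : Prop :=
  ∃ N ≤ k, ∃ j ≤ k, h j ∈ (τ N).guess j h

theorem finDep_catchesWithin (k : ℕ) : FinDep (CatchesWithin τ k) := by
  have hcatch (p : ℕ × ℕ) : FinDep fun h : ℕ → C => h p.2 ∈ (τ p.1).guess p.2 h :=
    ((FinDep.eval p.2).prodMk ((τ p.1).continuous p.2)).comp fun q => q.1 ∈ q.2
  refine FinDep.of_finset (fun _ => Finset.range (k + 1) ×ˢ Finset.range (k + 1)) hcatch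
    fun h h' hh' => propext ?_
  simp only [Finset.mem_product, Finset.mem_range, Nat.lt_succ_iff, and_imp, Prod.forall]
    at hh'
  exact exists_congr fun N => and_congr_right fun hN => exists_congr fun j =>
    and_congr_right fun hj => (hh' N j hN hj).to_iff

/-- Logician `i` plays every `τ N` with `N ≤ m`, in the role of logician `i - s` of the game
played on the hats from position `s ≤ i` on. -/
def boundedGuess (i m : ℕ) (h : ℕ → C) : Set C :=
  ⋃ p ∈ Finset.range (i + 1) ×ˢ Finset.range (m + 1),
    (τ p.2).guess (i - p.1) (h ∘ (p.1 + ·))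

theorem mk_boundedGuess_lt (hγ : ℵ₀ ≤ γ) (i m : ℕ) (h : ℕ → C) :
    #(boundedGuess τ i m h) < γ :=
  mk_biUnion_finset_lt hγ _ fun _ _ => (τ _).small _ _

theorem finDep_boundedGuess (i m : ℕ) : FinDep (boundedGuess τ i m) :=
  FinDep.of_finset (fun _ => Finset.range (i + 1) ×ˢ Finset.range (m + 1))
    (f := fun p h => (τ p.2).guess (i - p.1) (h ∘ (p.1 + ·)))
    (fun p => ((τ p.2).continuous (i - p.1)).precomp _)
    fun _ _ hh' => iUnion₂_congr hh'

theorem boundedGuess_blind (i m : ℕ) (h h' : ℕ → C) (hh' : ∀ b, b ≠ i → h b = h' b) :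
    boundedGuess τ i m h = boundedGuess τ i m h' := by
  refine iUnion₂_congr fun p hp => (τ p.2).blind _ _ _ fun b hb => hh' _ ?_
  have := Nat.lt_succ_iff.1 (Finset.mem_range.1 (Finset.mem_product.1 hp).1)
  change p.1 + b ≠ i
  omega

variable {τ} (H : ∀ h : ℕ → C, ∃ N i, h i ∈ (τ N).guess i h)
include H

theorem exists_catchesWithin (h : ℕ → C) : ∃ k, CatchesWithin τ k h := by
  obtain ⟨N, i, hi⟩ := H h
  exact ⟨max N i, N, le_max_left N i, i, le_max_right N i, hi⟩

open scoped Classical in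
noncomputable def catchRank (h : ℕ → C) : ℕ :=
  Nat.find (exists_catchesWithin H h)

open scoped Classical in
theorem catchesWithin_catchRank (h : ℕ → C) : CatchesWithin τ (catchRank H h) h :=
  Nat.find_spec (exists_catchesWithin H h)

open scoped Classical in
theorem finDep_catchRank : FinDep (catchRank H) :=
  FinDep.nat_find (finDep_catchesWithin τ) (exists_catchesWithin H)

variable (hγ : ℵ₀ ≤ γ)
include H hγ

noncomputable def merge : HatStrategy ℕ C γ where
  guess i h := boundedGuess τ i (catchRank H (h ∘ (i + 1 + ·))) h
  small i h := mk_boundedGuess_lt τ hγ i _ h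
  continuous i := FinDep.bind ((finDep_catchRank H).precomp _) (finDep_boundedGuess τ i)
  blind i h h' hh' := by
    have htail : h ∘ (i + 1 + ·) = h' ∘ (i + 1 + ·) :=
      funext fun b => hh' (i + 1 + b) (by omega)
    simp only [htail]
    exact boundedGuess_blind τ i _ h h' hh'

theorem merge_isWinning : (merge H hγ).IsWinning := by
  intro h
  set r : ℕ → ℕ := fun s => catchRank H (h ∘ (s + ·))
  set s := Function.argmin r
  obtain ⟨N, hN, j, -, hcatch⟩ := catchesWithin_catchRank H (h ∘ (s + ·))
  have hNbound : N ≤ r (s + j + 1) := hN.trans (Function.argmin_le r _)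
  refine ⟨s + j, mem_iUnion₂.2 ⟨(s, N), ?_, ?_⟩⟩
  · simp only [Finset.mem_product, Finset.mem_range]
    exact ⟨by omega, Nat.lt_succ_of_le (by simpa [r, Nat.add_assoc] using hNbound)⟩
  · simpa using hcatch

end HatStrategy

theorem stmt8_general (κ γ : Cardinal.{u}) (hγ : ℵ₀ ≤ γ)
    (τ : ℕ → HatStrategy ℕ κ.out γ)
    (H : ∀ h : ℕ → κ.out, ∃ N i, h i ∈ (τ N).guess i h) :
    HatWinning ℕ κ.out γ :=
  ⟨HatStrategy.merge H hγ, HatStrategy.merge_isWinning H hγ⟩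

/-- If there is a sequence of strategies `τ N` for the `(ω,κ,γ)`-hat game (with `γ` infinite,
`κ ≥ 1`) such that against every colouring some logician guesses correctly when following some
`τ N`, then the `(ω,κ,γ)`-hat game is winning. -/
theorem stmt8 (κ γ : Cardinal.{u}) (hκ : 1 ≤ κ) (hγ : ℵ₀ ≤ γ)
    (τ : ℕ → HatStrategy ℕ κ.out γ)
    (H : ∀ h : ℕ → κ.out, ∃ N i, h i ∈ (τ N).guess i h) :
    HatWinning ℕ κ.out γ :=
  stmt8_general κ γ hγ τ H
end

section
/- Let λ ≥ 1, κ ≥ 1 and γ ≥ 2 be cardinals. Suppose that for every strategy ⟨f_α : α < λ⟩ in the (λ,κ,γ)-hat game there exist a nonempty subset Y ⊆ λ and a function h : Y → κ such that for every α ∈ Y: (i) for any two functions h₁, h₂ : λ → κ extending h, f_α(h₁ restricted to λ∖{α}) = f_α(h₂ restricted to λ∖{α}) (the guess of logician α depends only on the hats in Y), and (ii) for every h' : λ → κ extending h, h(α) ∉ f_α(h' restricted to λ∖{α}). Then the (λ,κ,γ)-hat game is losing. -/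
open Cardinal Set

universe u v

/-! Zorn's lemma gives a maximal partial colouring `m` against which every logician coloured by
`m` guesses wrong on every extension. If `m` is total, it defeats the strategy. Otherwise fix an
uncoloured logician `β₀` and apply the hypothesis to the strategy in which the logicians coloured
by `m` guess the hat of `β₀`, while the others play the original strategy with the hats on the
domain of `m` overwritten by `m`. The resulting `Y` cannot lie inside the domain of `m`, since
`β₀ ∉ Y` can then be given the colour making such a logician guess right; so `m` extended by `h`
on `Y` is a strictly larger partial colouring of the same kind. -/

open scoped SetRel

namespace SetRel

variable {L : Type v} {C : Type u}

open scoped Classical in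
noncomputable def fill (m : SetRel L C) (g : L → C) (a : L) : C :=
  if h : a ∈ m.dom then h.choose else g a

variable {m : SetRel L C} {g g' : L → C} {a : L}

theorem fill_of_notMem_dom (ha : a ∉ m.dom) : m.fill g a = g a := dif_neg ha

theorem fill_apply_congr (h : a ∉ m.dom → g a = g' a) : m.fill g a = m.fill g' a := by
  by_cases ha : a ∈ m.dom
  · simp only [fill, dif_pos ha]
  · rw [fill_of_notMem_dom ha, fill_of_notMem_dom ha, h ha]

theorem fill_congr (h : ∀ a ∉ m.dom, g a = g' a) : m.fill g = m.fill g' :=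
  funext fun a ↦ fill_apply_congr (h a)

theorem fill_eq_self (hg : m ⊆ g.graph) : m.fill g = g := by
  funext a
  by_cases ha : a ∈ m.dom
  · rw [fill, dif_pos ha]
    exact (hg ha.choose_spec).symm
  · exact fill_of_notMem_dom ha

end SetRel

namespace HatStrategy

open SetRel

variable {L : Type v} {C : Type u} {γ : Cardinal.{u}}

/-- `m` is the graph of a partial colouring, and every logician it colours guesses wrong against
every colouring extending it. -/
structure Foils (S : HatStrategy L C γ) (m : SetRel L C) : Prop where
  functional : ∀ ⦃a b b'⦄, a ~[m] b → a ~[m] b' → b = b'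
  notMem_guess : ∀ ⦃a b⦄, a ~[m] b → ∀ g : L → C, m ⊆ g.graph → b ∉ S.guess a g

variable {S : HatStrategy L C γ}

theorem foils_sUnion {c : Set (SetRel L C)} (hc : ∀ m ∈ c, S.Foils m)
    (hchain : IsChain (· ⊆ ·) c) : S.Foils (⋃₀ c) where
  functional a b b' := by
    rintro ⟨m, hm, hab⟩ ⟨m', hm', hab'⟩
    rcases hchain.total hm hm' with hmm' | hm'm
    · exact (hc m' hm').functional (hmm' hab) hab'
    · exact (hc m hm).functional hab (hm'm hab')
  notMem_guess a b := by
    rintro ⟨m, hm, hab⟩ g hg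
    exact (hc m hm).notMem_guess hab g ((subset_sUnion_of_mem hm).trans hg)

theorem exists_maximal_foils (S : HatStrategy L C γ) : ∃ m, Maximal S.Foils m :=
  zorn_subset {m | S.Foils m} fun c hc hchain ↦
    ⟨⋃₀ c, foils_sUnion hc hchain, fun _ ↦ subset_sUnion_of_mem⟩

theorem Foils.not_isWinning {m : SetRel L C} (hm : S.Foils m) (htot : ∀ a, a ∈ m.dom) :
    ¬ S.IsWinning := by
  choose g hg using htot
  intro hS
  obtain ⟨a, ha⟩ := hS g
  exact hm.notMem_guess (hg a) g (fun ⟨a', b⟩ hab ↦ hm.functional (hg a') hab) ha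

open scoped Classical in
noncomputable def fixOn (S : HatStrategy L C γ) (m : SetRel L C) (β₀ : L) (hβ₀ : β₀ ∉ m.dom)
    (hγ : 1 < γ) : HatStrategy L C γ where
  guess a g := if a ∈ m.dom then {g β₀} else S.guess a (m.fill g)
  small a g := by
    split_ifs
    · simpa using hγ
    · exact S.small a _
  continuous a g := by
    by_cases ha : a ∈ m.dom
    · refine ⟨{β₀}, fun g' hg' ↦ ?_⟩
      simp only [if_pos ha, hg' β₀ (Finset.mem_singleton_self β₀)]
    · obtain ⟨F, hF⟩ := S.continuous a (m.fill g)
      refine ⟨F, fun g' hg' ↦ ?_⟩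
      simp only [if_neg ha]
      exact hF _ fun i hi ↦ fill_apply_congr fun _ ↦ hg' i hi
  blind a g g' hgg' := by
    by_cases ha : a ∈ m.dom
    · simp only [if_pos ha, hgg' β₀ (ne_of_mem_of_not_mem ha hβ₀).symm]
    · simp only [if_neg ha]
      exact S.blind a _ _ fun b hb ↦ fill_apply_congr fun _ ↦ hgg' b hb

variable {S : HatStrategy L C γ} {m : SetRel L C} {β₀ : L} {hβ₀ : β₀ ∉ m.dom} {hγ : 1 < γ}
  {Y : Set L} {h : L → C}

theorem fixOn_guess_of_mem {a : L} (ha : a ∈ m.dom) (g : L → C) :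
    (S.fixOn m β₀ hβ₀ hγ).guess a g = {g β₀} :=
  if_pos ha

theorem fixOn_guess_of_notMem {a : L} (ha : a ∉ m.dom) (g : L → C) :
    (S.fixOn m β₀ hβ₀ hγ).guess a g = S.guess a (m.fill g) :=
  if_neg ha

theorem exists_mem_notMem_dom_of_fixOn (hY : Y.Nonempty)
    (hwrong : ∀ α ∈ Y, ∀ g, EqOn g h Y → h α ∉ (S.fixOn m β₀ hβ₀ hγ).guess α g) :
    ∃ α ∈ Y, α ∉ m.dom := by
  classical
  by_contra! hYm
  obtain ⟨α, hα⟩ := hY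
  have hβ₀Y : β₀ ∉ Y := fun hβ₀' ↦ hβ₀ (hYm β₀ hβ₀')
  refine hwrong α hα (Function.update h β₀ (h α))
    (fun y hy ↦ Function.update_of_ne (ne_of_mem_of_not_mem hy hβ₀Y) _ _) ?_
  rw [fixOn_guess_of_mem (hYm α hα), Function.update_self]
  rfl

theorem Foils.union_of_fixOn (hm : S.Foils m)
    (hwrong : ∀ α ∈ Y, ∀ g, EqOn g h Y → h α ∉ (S.fixOn m β₀ hβ₀ hγ).guess α g) :
    S.Foils (m ∪ Prod.fst ⁻¹' (Y \ m.dom) ∩ h.graph) where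
  functional a b b' := by
    rintro (hab | ⟨⟨-, ha⟩, rfl⟩) (hab' | ⟨⟨-, ha'⟩, rfl⟩)
    · exact hm.functional hab hab'
    · exact absurd ⟨b, hab⟩ ha'
    · exact absurd ⟨b', hab'⟩ ha
    · rfl
  notMem_guess a b := by
    rintro (hab | ⟨⟨haY, ha⟩, rfl⟩) g hg
    · exact hm.notMem_guess hab g (subset_union_left.trans hg)
    · classical
      have hgh : ∀ y ∈ Y, y ∉ m.dom → g y = h y := fun y hy hym ↦
        hg (show (y, h y) ∈ _ from Or.inr ⟨⟨hy, hym⟩, rfl⟩)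
      have hfill : m.fill (Y.piecewise h g) = g := by
        refine (fill_congr fun y hym ↦ ?_).trans
          (fill_eq_self (subset_union_left.trans hg))
        by_cases hyY : y ∈ Y
        · rw [piecewise_eq_of_mem _ _ _ hyY, hgh y hyY hym]
        · exact piecewise_eq_of_notMem _ _ _ hyY
      have := hwrong a haY (Y.piecewise h g) (piecewise_eqOn _ _ _)
      rwa [fixOn_guess_of_notMem ha, hfill] at this

end HatStrategy

theorem stmt10_general (lam κ γ : Cardinal.{u}) (hγ : 2 ≤ γ)
    (H : ∀ S : HatStrategy lam.out κ.out γ,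
      ∃ Y : Set lam.out, Y.Nonempty ∧ ∃ h : lam.out → κ.out,
        ∀ α ∈ Y,
          (∀ h₁ h₂ : lam.out → κ.out, (∀ y ∈ Y, h₁ y = h y) → (∀ y ∈ Y, h₂ y = h y) →
            S.guess α h₁ = S.guess α h₂) ∧
          (∀ h' : lam.out → κ.out, (∀ y ∈ Y, h' y = h y) → h α ∉ S.guess α h')) :
    ¬ HatGameWinning lam κ γ := by
  rintro ⟨S, hS⟩
  obtain ⟨m, hm⟩ := S.exists_maximal_foils
  by_cases htot : ∀ a, a ∈ m.dom
  · exact hm.prop.not_isWinning htot hS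
  obtain ⟨β₀, hβ₀⟩ := not_forall.mp htot
  obtain ⟨Y, hY, h, hYh⟩ := H (S.fixOn m β₀ hβ₀ (Cardinal.one_lt_two.trans_le hγ))
  have hwrong := fun α hα ↦ (hYh α hα).2
  obtain ⟨α, hαY, hαm⟩ := HatStrategy.exists_mem_notMem_dom_of_fixOn hY hwrong
  have hext := hm.eq_of_subset (hm.prop.union_of_fixOn hwrong) subset_union_left
  exact hαm ⟨h α, hext ▸ Or.inr ⟨⟨hαY, hαm⟩, rfl⟩⟩

/-- If for every strategy in the `(λ,κ,γ)`-hat game there is a nonempty set `Y` of logicians and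
a colouring `h` of the hats in `Y` such that every logician in `Y` (i) produces the same guess
against any two colourings extending `h` (their guess only depends on the hats in `Y`) and
(ii) guesses incorrectly against every colouring extending `h`, then the `(λ,κ,γ)`-hat game is
losing. -/
theorem stmt10 (lam κ γ : Cardinal.{u}) (hlam : 1 ≤ lam) (hκ : 1 ≤ κ) (hγ : 2 ≤ γ)
    (H : ∀ S : HatStrategy lam.out κ.out γ,
      ∃ Y : Set lam.out, Y.Nonempty ∧ ∃ h : lam.out → κ.out,
        ∀ α ∈ Y,
          (∀ h₁ h₂ : lam.out → κ.out, (∀ y ∈ Y, h₁ y = h y) → (∀ y ∈ Y, h₂ y = h y) →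
            S.guess α h₁ = S.guess α h₂) ∧
          (∀ h' : lam.out → κ.out, (∀ y ∈ Y, h' y = h y) → h α ∉ S.guess α h')) :
    ¬ HatGameWinning lam κ γ :=
  stmt10_general lam κ γ hγ H
end

section
/- Let δ and γ be infinite cardinals and κ ≥ 1 a cardinal. If the (ω,κ,δ⁺)-hat game is winning (where δ⁺ is the cardinal successor of δ) and the (ω,δ,γ)-hat game is winning, then the (ω,κ,γ)-hat game is winning. -/
open Cardinal Set

universe u v

/-!
Arrange the logicians of the target game in columns `k`, each column playing the
`(ω,κ,δ⁺)`-strategy on its own hats. The least logician who guesses correctly in column `k` has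
at most `δ` candidate colours, so its true colour is encoded by an element of `δ`; taking the
least one (rather than any) correct logician makes this code depend on only finitely many hats
of the column. The columns now play the `(ω,δ,γ)`-strategy on these codes; it guesses fewer
than `γ` codes for column `k` without looking at column `k`, and each logician of that column
keeps those of its own candidates whose code was guessed. In a column where the code was guessed
correctly, its least correct logician is right.
-/

section FinDep

variable {ι κ C D X Y : Type*}

theorem FinDep.comp_s12 {f : (ι → C) → X} (hf : FinDep f) (g : X → Y) : FinDep (g ∘ f) :=
  fun h => (hf h).imp fun _ hF h' hh' => congrArg g (hF h' hh')

theorem finDep_apply (i : ι) : FinDep fun h : ι → C => h i :=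
  fun _ => ⟨{i}, fun _ hh' => hh' i (Finset.mem_singleton_self i)⟩

theorem FinDep.prodMk_s12 {f : (ι → C) → X} {g : (ι → C) → Y} (hf : FinDep f) (hg : FinDep g) :
    FinDep fun h => (f h, g h) := by
  classical
  intro h
  obtain ⟨F, hF⟩ := hf h
  obtain ⟨G, hG⟩ := hg h
  exact ⟨F ∪ G, fun h' hh' => Prod.ext (hF h' fun i hi => hh' i (Finset.mem_union_left G hi))
    (hG h' fun i hi => hh' i (Finset.mem_union_right F hi))⟩

theorem FinDep.comp_pi {f : (κ → D) → X} (hf : FinDep f) {g : κ → (ι → C) → D}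
    (hg : ∀ k, FinDep (g k)) : FinDep fun h => f fun k => g k h := by
  classical
  intro h
  obtain ⟨F, hF⟩ := hf fun k => g k h
  choose G hG using fun k => hg k h
  exact ⟨F.biUnion G, fun h' hh' => hF _ fun k hk =>
    hG k h' fun i hi => hh' i (Finset.mem_biUnion.2 ⟨k, hk, hi⟩)⟩

end FinDep

section SmallSetCode

variable {C D : Type u} [Nonempty D]

open Classical in
noncomputable def smallSetCode (s : Set C) (c : C) : D :=
  if h : #s ≤ #D ∧ c ∈ s then Classical.choice ((le_def s D).1 h.1) ⟨c, h.2⟩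
  else Classical.arbitrary D

theorem injOn_smallSetCode {s : Set C} (hs : #s ≤ #D) : InjOn (smallSetCode (D := D) s) s := by
  intro c hc c' hc' hcc'
  rw [smallSetCode, smallSetCode, dif_pos ⟨hs, hc⟩, dif_pos ⟨hs, hc'⟩] at hcc'
  exact congrArg Subtype.val ((Classical.choice ((le_def s D).1 hs)).injective hcc')

def smallSetDecode (s : Set C) (Q : Set D) : Set C :=
  {c ∈ s | smallSetCode s c ∈ Q}

theorem mk_smallSetDecode_le {s : Set C} (hs : #s ≤ #D) (Q : Set D) :
    #(smallSetDecode s Q) ≤ #Q := by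
  calc #(smallSetDecode s Q) = #(smallSetCode s '' smallSetDecode s Q) :=
        (mk_image_eq_of_injOn _ _ ((injOn_smallSetCode hs).mono fun _ hc => hc.1)).symm
    _ ≤ #Q := mk_le_mk_of_subset (image_subset_iff.2 fun _ hc => hc.2)

end SmallSetCode

namespace HatStrategy

section FirstWinner

variable {C : Type u} {β : Cardinal.{u}} (S : HatStrategy ℕ C β) (hS : S.IsWinning)

open Classical in
noncomputable def firstWinner (y : ℕ → C) : ℕ :=
  Nat.find (hS y)

theorem firstWinner_mem (y : ℕ → C) :
    y (S.firstWinner hS y) ∈ S.guess (S.firstWinner hS y) y := by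
  classical
  exact Nat.find_spec (hS y)

theorem firstWinner_le {y : ℕ → C} {j : ℕ} (hj : y j ∈ S.guess j y) :
    S.firstWinner hS y ≤ j := by
  classical
  exact Nat.find_min' (hS y) hj

theorem finDep_firstWinner :
    FinDep fun y => (S.firstWinner hS y, S.guess (S.firstWinner hS y) y,
      y (S.firstWinner hS y)) := by
  classical
  intro y
  set w := S.firstWinner hS y
  choose G hG using fun j => S.continuous j y
  refine ⟨(Finset.range (w + 1)).biUnion fun j => insert j (G j), fun y' hy' => ?_⟩
  have hagree : ∀ j ≤ w, y' j = y j ∧ S.guess j y' = S.guess j y := fun j hj =>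
    have hyj : ∀ i ∈ insert j (G j), y' i = y i := fun i hi =>
      hy' i (Finset.mem_biUnion.2 ⟨j, Finset.mem_range.2 (Nat.lt_succ_of_le hj), hi⟩)
    ⟨hyj j (Finset.mem_insert_self _ _), hG j y' fun i hi => hyj i (Finset.mem_insert_of_mem hi)⟩
  have hw : S.firstWinner hS y' = w := by
    refine le_antisymm (S.firstWinner_le hS ?_) (not_lt.1 fun hlt => ?_)
    · rw [(hagree w le_rfl).1, (hagree w le_rfl).2]
      exact S.firstWinner_mem hS y
    · have hmem := S.firstWinner_mem hS y'
      rw [(hagree _ hlt.le).1, (hagree _ hlt.le).2] at hmem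
      exact (S.firstWinner_le hS hmem).not_gt hlt
  dsimp only
  rw [hw, (hagree w le_rfl).1, (hagree w le_rfl).2]

variable {D : Type u} [Nonempty D]

noncomputable def columnCode (y : ℕ → C) : D :=
  smallSetCode (S.guess (S.firstWinner hS y) y) (y (S.firstWinner hS y))

theorem finDep_columnCode : FinDep (S.columnCode hS (D := D)) :=
  (S.finDep_firstWinner hS).comp_s12 fun p => smallSetCode p.2.1 p.2.2

end FirstWinner

section Compose

variable {C D : Type u} [Nonempty D] {L : Type v} {β γ : Cardinal.{u}}
  (S₁ : HatStrategy ℕ C β) (hS₁ : S₁.IsWinning) (S₂ : HatStrategy L D γ)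

def column (x : L × ℕ → C) (k : L) : ℕ → C :=
  fun j => x (k, j)

noncomputable def columnCodes (x : L × ℕ → C) : L → D :=
  fun k => S₁.columnCode hS₁ (column x k)

noncomputable def compose (hβ : β ≤ Order.succ #D) : HatStrategy (L × ℕ) C γ where
  guess a x := smallSetDecode (S₁.guess a.2 (column x a.1)) (S₂.guess a.1 (S₁.columnCodes hS₁ x))
  small a x := (mk_smallSetDecode_le (Order.lt_succ_iff.1 ((S₁.small _ _).trans_le hβ)) _).trans_lt
    (S₂.small _ _)
  continuous a :=
    (((S₁.continuous a.2).comp_pi fun i => finDep_apply (a.1, i)).prodMk_s12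
      ((S₂.continuous a.1).comp_pi fun k =>
        (S₁.finDep_columnCode hS₁).comp_pi fun i => finDep_apply (k, i))).comp_s12
      fun p => smallSetDecode p.1 p.2
  blind a x x' hxx' := by
    have hcol : S₁.guess a.2 (column x a.1) = S₁.guess a.2 (column x' a.1) :=
      S₁.blind _ _ _ fun j hj => hxx' _ fun h => hj (congrArg Prod.snd h)
    have hcodes : S₂.guess a.1 (S₁.columnCodes hS₁ x) = S₂.guess a.1 (S₁.columnCodes hS₁ x') :=
      S₂.blind _ _ _ fun k hk => congrArg (S₁.columnCode hS₁)
        (funext fun j => hxx' _ fun h => hk (congrArg Prod.fst h))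
    simp only [hcol, hcodes]

theorem compose_isWinning (hβ : β ≤ Order.succ #D) (hS₂ : S₂.IsWinning) :
    (S₁.compose hS₁ S₂ hβ).IsWinning := by
  intro x
  obtain ⟨k, hk⟩ := hS₂ (S₁.columnCodes hS₁ x)
  exact ⟨(k, S₁.firstWinner hS₁ (column x k)), S₁.firstWinner_mem hS₁ _, hk⟩

end Compose

end HatStrategy

theorem HatWinning.of_equiv {L L' : Type v} {C : Type u} {γ : Cardinal.{u}} (e : L ≃ L')
    (h : HatWinning L C γ) : HatWinning L' C γ := by
  classical
  obtain ⟨S, hS⟩ := h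
  refine ⟨⟨fun a x => S.guess (e.symm a) (x ∘ e), fun _ _ => S.small _ _, fun a x => ?_, ?_⟩, ?_⟩
  · obtain ⟨F, hF⟩ := S.continuous (e.symm a) (x ∘ e)
    exact ⟨F.image e, fun x' hx' => hF _ fun i hi => hx' (e i) (Finset.mem_image_of_mem e hi)⟩
  · intro a x x' hxx'
    exact S.blind _ _ _ fun b hb => hxx' (e b) fun h => hb (by rw [← h, Equiv.symm_apply_apply])
  · intro x
    obtain ⟨a, ha⟩ := hS (x ∘ e)
    exact ⟨e a, by simpa using ha⟩

theorem stmt12_general (δ γ κ : Cardinal.{u}) (hδ : ℵ₀ ≤ δ) :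
    HatWinning ℕ κ.out (Order.succ δ) → HatWinning ℕ δ.out γ → HatWinning ℕ κ.out γ := by
  rintro ⟨S₁, hS₁⟩ ⟨S₂, hS₂⟩
  have : Nonempty δ.out := mk_ne_zero_iff.1 (by rw [mk_out]; exact (aleph0_pos.trans_le hδ).ne')
  have hβ : Order.succ δ ≤ Order.succ #δ.out := by rw [mk_out]
  exact HatWinning.of_equiv (Denumerable.eqv (ℕ × ℕ))
    ⟨S₁.compose hS₁ S₂ hβ, S₁.compose_isWinning hS₁ S₂ hβ hS₂⟩

/-- If the `(ω,κ,δ⁺)`-hat game and the `(ω,δ,γ)`-hat game are winning (with `δ`, `γ` infinite and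
`κ ≥ 1`), then so is the `(ω,κ,γ)`-hat game. -/
theorem stmt12 (δ γ κ : Cardinal.{u}) (hδ : ℵ₀ ≤ δ) (hγ : ℵ₀ ≤ γ) (hκ : 1 ≤ κ) :
    HatWinning ℕ κ.out (Order.succ δ) → HatWinning ℕ δ.out γ → HatWinning ℕ κ.out γ :=
  stmt12_general δ γ κ hδ
end

section
/- Let κ and γ be infinite cardinals. If κ has the γ-FInA, then κ has the γ⁺-FInA, where γ⁺ denotes the cardinal successor of γ. -/
open Cardinal Set

universe u v

/-- `A` is forwards `F`-independent: no `α ∈ A` lies in a value of a function of the countable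
family `F` applied to arguments from `A` that are all larger than `α`. -/
def ForwardsIndep {O : Type u} [LT O] (F : ℕ → Σ n : ℕ, (Fin n → O) → Set O)
    (A : Set O) : Prop :=
  ∀ α ∈ A, ∀ i : ℕ, ∀ x : Fin (F i).1 → O, (∀ j, x j ∈ A ∧ α < x j) → α ∉ (F i).2 x

/-- `κ` has the `γ`-FInA: for every countable family of finitary functions
`f : κ^n → [κ]^{<γ}` there is a countably infinite forwards independent subset of `κ`. -/
def FInA (κ γ : Cardinal.{u}) : Prop :=
  ∀ F : ℕ → Σ n : ℕ, (Fin n → HatColour κ) → Set (HatColour κ),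
    (∀ i x, #((F i).2 x) < γ) →
    ∃ A : Set (HatColour κ), A.Countable ∧ A.Infinite ∧ ForwardsIndep F A

/-
Well-order each value `f x` (of size at most `γ`) in order type at most `γ`. Apply the `γ`-FInA to
the family that sends, for each pair `f, g` of the given functions, the arguments `x, y, β` to the
points of `f x` whose rank is at most the rank of `β` in `g y`: these sets have size `< γ`. In the
resulting set `A`, if `α < β` are both dependent, witnessed by `α ∈ f x` and `β ∈ g y` with
arguments from `A` above them, then `(x, y, β)` lies above `α`, so by independence the rank of `β`
in `g y` is strictly below the rank of `α` in `f x`. Ranks are ordinals, so only finitely many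
points of `A` are dependent, and removing them leaves an infinite forwards independent set.
-/

theorem Set.finite_of_strictAnti {O T : Type*} [LinearOrder O] [WellFoundedLT O] [Preorder T]
    [WellFoundedLT T] {S : Set O} {ρ : S → T} (hρ : StrictAnti ρ) : S.Finite := by
  have : WellFoundedGT S := hρ.wellFoundedGT
  have := Finite.of_wellFoundedLT_wellFoundedGT S
  exact S.toFinite

theorem Set.exists_injOn_of_mk_le {O T : Type u} [Nonempty T] {s : Set O} (h : #s ≤ #T) :
    ∃ r : O → T, InjOn r s := by
  obtain ⟨e⟩ := h
  classical
  exact ⟨fun z => if hz : z ∈ s then e ⟨z, hz⟩ else Classical.arbitrary T,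
    fun z hz w hw hzw => by simpa [hz, hw] using hzw⟩

theorem Cardinal.mk_Iic_toType_ord_lt {γ : Cardinal.{u}} (hγ : ℵ₀ ≤ γ) (c : γ.ord.ToType) :
    #(Iic c) < γ :=
  calc #(Iic c) = #(insert c (Iio c) : Set _) := by rw [Iio_insert]
    _ ≤ #(Iio c) + 1 := mk_insert_le
    _ < γ := add_lt_of_lt hγ (by simpa using mk_Iio_lt c) (one_lt_aleph0.trans_le hγ)

section ForwardsIndependence

variable {O T : Type u} {F : ℕ → Σ n : ℕ, (Fin n → O) → Set O}

variable (F) in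
def forwardsDependent [LT O] (A : Set O) : Set O :=
  {α | α ∈ A ∧ ∃ i x, (∀ j, x j ∈ A ∧ α < x j) ∧ α ∈ (F i).2 x}

variable (F) in
theorem forwardsIndep_diff_forwardsDependent [LT O] (A : Set O) :
    ForwardsIndep F (A \ forwardsDependent F A) :=
  fun _ hα i x hx hmem => hα.2 ⟨hα.1, i, x, fun j => ⟨(hx j).1.1, (hx j).2⟩, hmem⟩

variable (F) in
/-- The index `k` codes the pair `(i, j) = k.unpair`, and the arguments are `Fin.append x
(Fin.snoc y β)` with `x` an argument of `F i` and `y` one of `F j`. -/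
def rankCompare [LE T] (r : ∀ i, (Fin (F i).1 → O) → O → T) :
    ℕ → Σ n : ℕ, (Fin n → O) → Set O :=
  fun k => ⟨(F k.unpair.1).1 + ((F k.unpair.2).1 + 1), fun v =>
    let x := fun m => v (Fin.castAdd _ m)
    let w := fun m => v (Fin.natAdd _ m)
    {z | z ∈ (F k.unpair.1).2 x ∧ w (Fin.last _) ∈ (F k.unpair.2).2 (Fin.init w) ∧
      r _ x z ≤ r _ (Fin.init w) (w (Fin.last _))}⟩

theorem mk_rankCompare_lt [Preorder T] {γ : Cardinal.{u}} (hT : ∀ c : T, #(Iic c) < γ)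
    {r : ∀ i, (Fin (F i).1 → O) → O → T} (hr : ∀ i x, InjOn (r i x) ((F i).2 x))
    (k : ℕ) (v : Fin (rankCompare F r k).1 → O) : #((rankCompare F r k).2 v) < γ := by
  dsimp only [rankCompare]
  set x := fun m => v (Fin.castAdd _ m)
  set w := fun m => v (Fin.natAdd _ m)
  set c := r _ (Fin.init w) (w (Fin.last _))
  calc _ ≤ #{z ∈ (F k.unpair.1).2 x | r _ x z ≤ c} := mk_le_mk_of_subset fun z hz => ⟨hz.1, hz.2.2⟩
    _ = #(r _ x '' {z ∈ (F k.unpair.1).2 x | r _ x z ≤ c}) :=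
      (mk_image_eq_of_injOn _ _ ((hr _ x).mono fun _ hz => hz.1)).symm
    _ ≤ #(Iic c) := mk_le_mk_of_subset (image_subset_iff.2 fun _ hz => hz.2)
    _ < γ := hT c

theorem rank_lt_of_forwardsIndep_rankCompare [Preorder O] [LinearOrder T]
    {r : ∀ i, (Fin (F i).1 → O) → O → T}
    {A : Set O} (hA : ForwardsIndep (rankCompare F r) A) {α β : O} (hα : α ∈ A) (hβ : β ∈ A)
    (hαβ : α < β) {i j : ℕ} {x : Fin (F i).1 → O} {y : Fin (F j).1 → O}
    (hx : ∀ m, x m ∈ A ∧ α < x m) (hy : ∀ m, y m ∈ A ∧ β < y m)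
    (hαx : α ∈ (F i).2 x) (hβy : β ∈ (F j).2 y) : r j y β < r i x α := by
  obtain ⟨k, rfl, rfl⟩ : ∃ k : ℕ, k.unpair.1 = i ∧ k.unpair.2 = j := ⟨Nat.pair i j, by simp⟩
  by_contra! hle
  refine hA α hα k (Fin.append x (Fin.snoc y β)) (fun m => ?_) ?_
  · induction m using Fin.addCases with
    | left m => simpa using hx m
    | right m =>
      induction m using Fin.lastCases with
      | last => rw [Fin.append_right, Fin.snoc_last]; exact ⟨hβ, hαβ⟩
      | cast m => simpa using ⟨(hy m).1, hαβ.trans (hy m).2⟩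
  · refine ⟨?_, ?_, ?_⟩ <;> simpa [rankCompare, -Fin.natAdd_last]

theorem forwardsDependent_finite [LinearOrder O] [WellFoundedLT O] [LinearOrder T]
    [WellFoundedLT T] {r : ∀ i, (Fin (F i).1 → O) → O → T} {A : Set O}
    (hA : ForwardsIndep (rankCompare F r) A) : (forwardsDependent F A).Finite := by
  choose i x hx hαx using fun α : forwardsDependent F A => α.2.2
  exact Set.finite_of_strictAnti (ρ := fun α => r (i α) (x α) α) fun α β hαβ =>
    rank_lt_of_forwardsIndep_rankCompare hA α.2.1 β.2.1 hαβ (hx α) (hx β) (hαx α) (hαx β)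

end ForwardsIndependence

theorem stmt15_general (κ γ : Cardinal.{u}) (hγ : ℵ₀ ≤ γ) :
    FInA κ γ → FInA κ (Order.succ γ) := by
  intro hFInA F hF
  have : Nonempty (HatColour γ) := by
    rw [Ordinal.nonempty_toType_iff, ne_eq, ord_eq_zero]
    exact (aleph0_pos.trans_le hγ).ne'
  choose r hr using fun i x => Set.exists_injOn_of_mk_le (T := HatColour γ) <| by
    simpa [Order.lt_succ_iff] using hF i x
  obtain ⟨A, hAc, hAi, hA⟩ :=
    hFInA (rankCompare F r) (mk_rankCompare_lt (Cardinal.mk_Iic_toType_ord_lt hγ) hr)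
  exact ⟨A \ forwardsDependent F A, hAc.mono sdiff_subset, hAi.sdiff (forwardsDependent_finite hA),
    forwardsIndep_diff_forwardsDependent F A⟩

/-- For infinite `κ` and `γ`: if `κ` has the `γ`-FInA then `κ` has the `γ⁺`-FInA. -/
theorem stmt15 (κ γ : Cardinal.{u}) (hκ : ℵ₀ ≤ κ) (hγ : ℵ₀ ≤ γ) :
    FInA κ γ → FInA κ (Order.succ γ) :=
  stmt15_general κ γ hγ
end

section
/- Let κ be a measurable cardinal, i.e., κ is uncountable and there exists a nonprincipal ultrafilter U on κ that is κ-complete (the intersection of any family of fewer than κ many sets in U is again in U). Then κ is strongly MInA. -/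
open Cardinal Set

universe u v

/-! Choose the independent set one point at a time, keeping the points chosen so far independent
even after adjoining an `m`-tuple that is generic for the Fubini power `U^m`. For a new point `b`
and a fixed function of the family, the points lying `U^m`-almost surely in its value number fewer
than `γ`: otherwise `κ`-completeness of `U^m` would put `γ` of them into a single value. Hence a
`U`-generic `b` avoids them, and `κ`-completeness handles the countably many constraints at once. -/

namespace Filter

variable {α β : Type u} {c : Cardinal.{u}}

theorem cardinalInterFilter_bind {f : Filter α} {m : α → Filter β} [CardinalInterFilter f c]
    (hm : ∀ a, CardinalInterFilter (m a) c) : CardinalInterFilter (f.bind m) c where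
  cardinal_sInter_mem S hS hmem := by
    rw [mem_bind']
    have : ∀ᶠ a in f, ∀ s ∈ S, s ∈ m a := (eventually_cardinal_ball hS).2 fun s hs => hmem s hs
    filter_upwards [this] with a ha
    exact (cardinal_sInter_mem hS).2 ha

end Filter

namespace Ultrafilter

open Filter

variable {O : Type u} {κ γ : Cardinal.{u}} (U : Ultrafilter O)

noncomputable def fubiniPow : (m : ℕ) → Ultrafilter (Fin m → O)
  | 0 => pure Fin.elim0
  | m + 1 => U.bind fun b => (fubiniPow m).map (Fin.cons b)

theorem eventually_fubiniPow_succ {m : ℕ} {P : (Fin (m + 1) → O) → Prop} :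
    (∀ᶠ w in U.fubiniPow (m + 1), P w) ↔ ∀ᶠ b in U, ∀ᶠ v in U.fubiniPow m, P (Fin.cons b v) :=
  Iff.rfl

theorem cardinalInterFilter_fubiniPow [CardinalInterFilter (U : Filter O) κ] :
    ∀ m, CardinalInterFilter (U.fubiniPow m : Filter (Fin m → O)) κ
  | 0 => by
    rw [fubiniPow, coe_pure, ← principal_singleton]
    infer_instance
  | m + 1 => by
    have := cardinalInterFilter_fubiniPow m
    refine cardinalInterFilter_bind fun b => ?_
    rw [coe_map]
    infer_instance

variable {U}

theorem compl_mem_of_mk_lt [CardinalInterFilter (U : Filter O) κ] (hU : ∀ a, {a} ∉ U)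
    {s : Set O} (hs : #s < κ) : sᶜ ∈ U := by
  have : sᶜ = ⋂ a ∈ s, {a}ᶜ := by rw [← compl_iUnion₂, biUnion_of_singleton]
  rw [this]
  exact (cardinal_bInter_mem hs).2 fun a _ => compl_mem_iff_notMem.2 (hU a)

theorem eventually_eventually_notMem {β : Type u} {V : Ultrafilter β}
    [CardinalInterFilter (V : Filter β) κ] (hsmall : ∀ s : Set O, #s < κ → sᶜ ∈ U)
    (hγκ : γ < κ) {g : β → Set O} (hg : ∀ v, #(g v) < γ) :
    ∀ᶠ b in U, ∀ᶠ v in V, b ∉ g v := by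
  set T := {b | ∀ᶠ v in V, b ∈ g v}
  have hT : #T < γ := by
    by_contra! h
    obtain ⟨T', hT'T, hT'⟩ := le_mk_iff_exists_subset.mp h
    have hcaught : ∀ᶠ v in V, ∀ t ∈ T', t ∈ g v :=
      (eventually_cardinal_ball (hT' ▸ hγκ)).2 fun t ht => hT'T ht
    obtain ⟨v, hv⟩ := hcaught.exists
    exact (hg v).not_ge (hT' ▸ mk_le_mk_of_subset hv)
  filter_upwards [hsmall T (hT.trans hγκ)] with b hb
  exact Ultrafilter.eventually_not.2 hb

end Ultrafilter

section Independence

open Filter Ultrafilter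

variable {O : Type u} (F : ℕ → Σ n : ℕ, (Fin n → O) → Set O)

def MutuallyIndepAt (A : Set O) (α : O) : Prop :=
  ∀ i : ℕ, ∀ x : Fin (F i).1 → O, (∀ j, x j ∈ A \ {α}) → α ∉ (F i).2 x

def GenericallyIndep (U : Ultrafilter O) (S : Set O) : Prop :=
  ∀ m, ∀ᶠ v : Fin m → O in U.fubiniPow m, ∀ α ∈ S, MutuallyIndepAt F (S ∪ range v) α

variable {F} {U : Ultrafilter O}

theorem mutuallyIndep_iUnion {ι : Type*} [Preorder ι] [IsDirected ι (· ≤ ·)] [Nonempty ι]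
    {S : ι → Set O} (hS : Monotone S) (h : ∀ n, MutuallyIndep F (S n)) :
    MutuallyIndep F (⋃ n, S n) := by
  have hev {a : O} (ha : a ∈ ⋃ n, S n) : ∀ᶠ n in atTop, a ∈ S n := by
    obtain ⟨n, hn⟩ := mem_iUnion.1 ha
    filter_upwards [eventually_ge_atTop n] with k hk using hS hk hn
  intro α hα i x hx
  obtain ⟨n, hαn, hxn⟩ := ((hev hα).and (eventually_all.2 fun j => hev (hx j).1)).exists
  exact h n α hαn i x fun j => ⟨hxn j, (hx j).2⟩

theorem genericallyIndep_empty : GenericallyIndep F U ∅ :=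
  fun _ => Eventually.of_forall fun _ _ h => h.elim

theorem GenericallyIndep.mutuallyIndep {S : Set O} (h : GenericallyIndep F U S) :
    MutuallyIndep F S := by
  obtain ⟨v, hv⟩ := (h 0).exists
  simpa [MutuallyIndepAt, MutuallyIndep, range_eq_empty] using hv

theorem GenericallyIndep.exists_insert {κ γ : Cardinal.{u}} (hκ : ℵ₀ < κ) (hγκ : γ < κ)
    [CardinalInterFilter (U : Filter O) κ] (hsmall : ∀ s : Set O, #s < κ → sᶜ ∈ U)
    (hF : ∀ i x, #((F i).2 x) < γ) {S : Set O} (hS : S.Countable)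
    (h : GenericallyIndep F U S) : ∃ b ∉ S, GenericallyIndep F U (insert b S) := by
  have := CardinalInterFilter.toCountableInterFilter (U : Filter O) hκ
  have := U.cardinalInterFilter_fubiniPow (κ := κ)
  have (m : ℕ) :=
    CardinalInterFilter.toCountableInterFilter (U.fubiniPow m : Filter (Fin m → O)) hκ
  have := hS.to_subtype
  have hold : ∀ᶠ b in U, ∀ m, ∀ᶠ v : Fin m → O in U.fubiniPow m,
      ∀ α ∈ S, MutuallyIndepAt F (insert b S ∪ range v) α := by
    refine eventually_countable_forall.2 fun m => ?_
    have := (eventually_fubiniPow_succ U).1 (h (m + 1))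
    simpa only [Fin.range_cons, union_insert, insert_union] using this
  -- arguments from `S ∪ range v` are indexed by the countable type `S ⊕ Fin m`, fixed in advance
  have hnew : ∀ᶠ b in U, ∀ m, ∀ᶠ v : Fin m → O in U.fubiniPow m,
      ∀ i (s : Fin (F i).1 → S ⊕ Fin m), b ∉ (F i).2 (Sum.elim (↑) v ∘ s) := by
    simp only [eventually_countable_forall]
    exact fun m i s => eventually_eventually_notMem hsmall hγκ fun v => hF i _
  have hnotMem : ∀ᶠ b in U, b ∉ S := hsmall S (hS.le_aleph0.trans_lt hκ)
  obtain ⟨b, hbS, hbold, hbnew⟩ := (hnotMem.and (hold.and hnew)).exists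
  refine ⟨b, hbS, fun m => ?_⟩
  filter_upwards [hbold m, hbnew m] with v hvold hvnew
  rintro α (rfl | hα)
  · intro i x hx
    have hrange (j) : x j ∈ range (Sum.elim ((↑) : S → O) v) := by
      rw [Sum.elim_range, Subtype.range_coe]
      exact (insert_union (s := S) ▸ (hx j).1).resolve_left (hx j).2
    choose s hs using hrange
    simpa [show Sum.elim (↑) v ∘ s = x from funext hs] using hvnew i s
  · exact hvold α hα

end Independence

theorem exists_monotone_of_exists_insert {O : Type u} {P : Set O → Prop} (h0 : P ∅)
    (hstep : ∀ S, S.Finite → P S → ∃ b ∉ S, P (insert b S)) :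
    ∃ S : ℕ → Set O,
      Monotone S ∧ (∀ n, P (S n)) ∧ (⋃ n, S n).Countable ∧ (⋃ n, S n).Infinite := by
  have : Nonempty O := let ⟨b, _⟩ := hstep ∅ finite_empty h0; ⟨b⟩
  choose! next hnext_notMem hnext using hstep
  set S : ℕ → Set O := fun n => (fun T => insert (next T) T)^[n] ∅
  have hS_succ (n) : S (n + 1) = insert (next (S n)) (S n) := Function.iterate_succ_apply' ..
  have hS (n) : (S n).Finite ∧ P (S n) := by
    induction n with
    | zero => exact ⟨finite_empty, h0⟩
    | succ n ih => exact hS_succ n ▸ ⟨ih.1.insert _, hnext _ ih.1 ih.2⟩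
  have hmono : Monotone S := monotone_nat_of_le_succ fun n => hS_succ n ▸ subset_insert _ _
  have hinj : Function.Injective fun n => next (S n) := by
    refine Function.Injective.of_lt_imp_ne fun n k hnk heq => hnext_notMem _ (hS k).1 (hS k).2 ?_
    exact hmono hnk (hS_succ n ▸ heq ▸ mem_insert _ _)
  refine ⟨S, hmono, fun n => (hS n).2, countable_iUnion fun n => (hS n).1.countable, ?_⟩
  refine (infinite_range_of_injective hinj).mono ?_
  rintro _ ⟨n, rfl⟩
  exact mem_iUnion.2 ⟨n + 1, hS_succ n ▸ mem_insert _ _⟩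

/-- If `κ` is measurable (uncountable, and carrying a nonprincipal `κ`-complete ultrafilter),
then `κ` is strongly MInA. -/
theorem stmt18 (κ : Cardinal.{u}) (hκ : ℵ₀ < κ)
    (U : Ultrafilter (HatColour κ))
    (hnonprincipal : ∀ a : HatColour κ, {a} ∉ U)
    (hcomplete : ∀ (ι : Type u) (s : ι → Set (HatColour κ)), #ι < κ →
      (∀ i, s i ∈ U) → (⋂ i, s i) ∈ U) :
    StronglyMInA κ := by
  intro γ _ hγκ F hF
  have : CardinalInterFilter (U : Filter (HatColour κ)) κ :=
    ⟨fun S hS hmem => sInter_eq_iInter ▸ hcomplete S _ hS fun s => hmem s s.2⟩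
  have hsmall (s : Set (HatColour κ)) (hs : #s < κ) : sᶜ ∈ U :=
    Ultrafilter.compl_mem_of_mk_lt hnonprincipal hs
  obtain ⟨S, hmono, hS, hcount, hinf⟩ := exists_monotone_of_exists_insert genericallyIndep_empty
    fun S hfin h => h.exists_insert hκ hγκ hsmall hF hfin.countable
  exact ⟨_, hcount, hinf, mutuallyIndep_iUnion hmono fun n => (hS n).mutuallyIndep⟩
end

section
/- Let κ and γ be infinite cardinals and suppose the partition relation κ → (ω)^{<ω}_γ holds. Then κ has the γ-MInA. In particular, if κ → (ω)^{<ω}_δ holds for every cardinal δ < κ, then κ is strongly MInA. -/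
open Cardinal Set

universe u v

/-- The partition relation `κ → (ω)^{<ω}_γ`: every colouring of the finite subsets of `κ` in
`γ`-many colours admits a countably infinite homogeneous set. -/
def PartitionOmegaFin (κ γ : Cardinal.{u}) : Prop :=
  ∀ f : Finset (HatColour κ) → γ.out,
    ∃ H : Set (HatColour κ), H.Countable ∧ H.Infinite ∧
      ∀ s t : Finset (HatColour κ), ↑s ⊆ H → ↑t ⊆ H → s.card = t.card → f s = f t


/-!
Colour a finite set `s = {s₀ < ⋯ < s_{m-1}}` by recording, for every `i < m`, every position `p`
and every tuple `q` of positions, whether `s_p ∈ fᵢ(s ∘ q)` and, if so, which element of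
`fᵢ(s ∘ q)` it is, read through an injection `fᵢ(s ∘ q) ↪ γ`; for infinite `γ` there are at most
`γ` such colours. Suppose `α ∈ fᵢ(x)` with `α` and the entries of `x` taken from a homogeneous set
`H`. Homogeneity transfers this, with the same code, to two increasing tuples from `H` that agree
except at the position of `α`, and injectivity of the code makes them agree there as well.
-/

theorem nonempty_finite_arrow_option_embedding (α : Type v) [Finite α] (β : Type u) [Infinite β] :
    Nonempty ((α → Option β) ↪ β) := by
  have hβ : ℵ₀ ≤ #β := Cardinal.infinite_iff.1 ‹_›
  obtain ⟨n, ⟨eα⟩⟩ := Finite.exists_equiv_fin α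
  have hle : #(Fin n → Option β) ≤ #β := by
    rw [Cardinal.mk_arrow, Cardinal.mk_option, Cardinal.add_one_eq hβ]
    simpa using Cardinal.power_nat_le (n := n) hβ
  obtain ⟨f⟩ := hle
  exact ⟨(Equiv.arrowCongr eα (Equiv.refl _)).toEmbedding.trans f⟩

section OptionCode

variable {O : Type*} {C : Type*} {S : Set O}

open Classical in
noncomputable def optionCode (e : S ↪ C) (a : O) : Option C :=
  if h : a ∈ S then some (e ⟨a, h⟩) else none

theorem optionCode_ne_none (e : S ↪ C) {a : O} (ha : a ∈ S) : optionCode e a ≠ none := by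
  simp [optionCode, ha]

theorem eq_of_optionCode_eq (e : S ↪ C) {a b : O} (hab : optionCode e a = optionCode e b)
    (ha : optionCode e a ≠ none) : a = b := by
  unfold optionCode at hab ha
  split_ifs at hab ha with haS hbS
  · exact congrArg Subtype.val (e.injective (Option.some.inj hab))
  · exact absurd rfl ha

end OptionCode

section LinearOrder

variable {O : Type*} [LinearOrder O] {H : Set O} {m : ℕ}

theorem Set.Infinite.exists_strictMono_fin_superset (hH : H.Infinite) {S : Finset O}
    (hSH : ↑S ⊆ H) (hm : S.card ≤ m) :
    ∃ v : Fin m → O, StrictMono v ∧ range v ⊆ H ∧ ↑S ⊆ range v := by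
  obtain ⟨T, hTH, hTcard⟩ := (hH.sdiff S.finite_toSet).exists_subset_card_eq (m - S.card)
  have hdisj : Disjoint S T := Finset.disjoint_left.2 fun a haS haT => (hTH haT).2 haS
  have hcard : (S ∪ T).card = m := by
    rw [Finset.card_union_of_disjoint hdisj, hTcard]
    omega
  refine ⟨(S ∪ T).orderEmbOfFin hcard, OrderEmbedding.strictMono _, ?_, ?_⟩
  · rw [Finset.range_orderEmbOfFin, Finset.coe_union]
    exact union_subset hSH (hTH.trans sdiff_subset)
  · rw [Finset.range_orderEmbOfFin, Finset.coe_union]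
    exact subset_union_left

/-- Drop the neighbouring entries `p + 1`, respectively `p`, of an increasing `(m + 1)`-tuple. -/
theorem Set.Infinite.exists_strictMono_fin_pair (hH : H.Infinite) (p : Fin m) :
    ∃ u u' : Fin m → O, StrictMono u ∧ StrictMono u' ∧ range u ⊆ H ∧ range u' ⊆ H ∧
      (∀ j ≠ p, u j = u' j) ∧ u p ≠ u' p := by
  obtain ⟨w, hw, hwH, -⟩ := hH.exists_strictMono_fin_superset (S := ∅) (by simp)
    (Nat.zero_le (m + 1))
  refine ⟨w ∘ p.succ.succAbove, w ∘ p.castSucc.succAbove, hw.comp (Fin.strictMono_succAbove _),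
    hw.comp (Fin.strictMono_succAbove _), (range_comp_subset_range _ _).trans hwH,
    (range_comp_subset_range _ _).trans hwH, fun j hj => ?_, ?_⟩
  · rcases hj.lt_or_gt with hjp | hpj
    · simp [Fin.succAbove_succ_of_le _ _ hjp.le, Fin.succAbove_castSucc_of_lt _ _ hjp]
    · simp [Fin.succAbove_succ_of_lt _ _ hpj, Fin.succAbove_castSucc_of_le _ _ hpj.le]
  · simpa using hw.injective.ne (Fin.castSucc_lt_succ (i := p)).ne

variable {C : Type*}

def IsHomogeneous (c : Finset O → C) (H : Set O) : Prop :=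
  ∀ s t : Finset O, ↑s ⊆ H → ↑t ⊆ H → s.card = t.card → c s = c t

def colourByEnum (Φ : ∀ m, (Fin m → O) → C) (s : Finset O) : C :=
  Φ s.card (s.orderEmbOfFin rfl)

theorem colourByEnum_eq (Φ : ∀ m, (Fin m → O) → C) {s : Finset O} (hs : s.card = m) :
    colourByEnum Φ s = Φ m (s.orderEmbOfFin hs) := by
  subst hs
  rfl

theorem colourByEnum_map_of_strictMono (Φ : ∀ m, (Fin m → O) → C) {u : Fin m → O}
    (hu : StrictMono u) : colourByEnum Φ (Finset.univ.map ⟨u, hu.injective⟩) = Φ m u := by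
  have hcard : (Finset.univ.map ⟨u, hu.injective⟩).card = m := by simp
  rw [colourByEnum_eq Φ hcard, ← Finset.orderEmbOfFin_unique hcard (by simp) hu]

theorem IsHomogeneous.apply_eq_of_strictMono {Φ : ∀ m, (Fin m → O) → C}
    (hΦ : IsHomogeneous (colourByEnum Φ) H) {u u' : Fin m → O} (hu : StrictMono u)
    (hu' : StrictMono u') (huH : range u ⊆ H) (hu'H : range u' ⊆ H) : Φ m u = Φ m u' := by
  rw [← colourByEnum_map_of_strictMono Φ hu, ← colourByEnum_map_of_strictMono Φ hu']
  exact hΦ _ _ (by simpa using huH) (by simpa using hu'H) (by simp)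

end LinearOrder

section Trace

variable {O : Type u} {C : Type*} (F : ℕ → Σ n : ℕ, (Fin n → O) → Set O)
  (e : ∀ i y, (F i).2 y ↪ C)

/-- A pattern `⟨i, p, q⟩` of size `m` asks whether the `p`-th entry of an `m`-tuple lies in the
value of the `i`-th function at the entries indexed by `q`. -/
abbrev Pattern (m : ℕ) : Type := Σ i : Fin m, Fin m × (Fin (F i).1 → Fin m)

noncomputable def trace (m : ℕ) (u : Fin m → O) : Pattern F m → Option C :=
  fun π => optionCode (e π.1 (u ∘ π.2.2)) (u π.2.1)

variable [LinearOrder O]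

noncomputable def traceColouring (emb : ∀ m, (Pattern F m → Option C) ↪ C) : Finset O → C :=
  colourByEnum fun m u => emb m (trace F e m u)

variable {F e} in
theorem IsHomogeneous.mutuallyIndep {H : Set O} {emb : ∀ m, (Pattern F m → Option C) ↪ C}
    (hhom : IsHomogeneous (traceColouring F e emb) H) (hH : H.Infinite) :
    MutuallyIndep F H := by
  intro α hα i x hx hmem
  obtain ⟨S, hSH, hαS, hxS⟩ : ∃ S : Finset O, ↑S ⊆ H ∧ α ∈ S ∧ ∀ j, x j ∈ S :=
    ⟨insert α (Finset.univ.image x), by simpa [insert_subset_iff, range_subset_iff] using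
      ⟨hα, fun j => (hx j).1⟩, by simp, by simp⟩
  obtain ⟨v, hv, hvH, hSv⟩ :=
    hH.exists_strictMono_fin_superset (m := S.card + i + 1) hSH (by omega)
  obtain ⟨p, rfl⟩ : α ∈ range v := hSv hαS
  choose q hq using fun j => hSv (hxS j)
  have hqp : ∀ j, q j ≠ p := fun j hj => (hx j).2 (by simp [← hq j, hj])
  rw [show x = v ∘ q from funext fun j => (hq j).symm] at hmem
  obtain ⟨u, u', hu, hu', huH, hu'H, hagree, hne⟩ := hH.exists_strictMono_fin_pair p
  have htrace : ∀ {w : Fin (S.card + i + 1) → O}, StrictMono w → range w ⊆ H →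
      trace F e _ w = trace F e _ v := fun hw hwH =>
    (emb _).injective (hhom.apply_eq_of_strictMono (Φ := fun m u => emb m (trace F e m u))
      hw hv hwH hvH)
  let π : Pattern F (S.card + i + 1) := ⟨⟨i, by omega⟩, p, q⟩
  have hu_ne : optionCode (e i (u ∘ q)) (u p) ≠ none := by
    change trace F e _ u π ≠ none
    rw [htrace hu huH]
    exact optionCode_ne_none _ hmem
  have huu' : optionCode (e i (u ∘ q)) (u p) = optionCode (e i (u' ∘ q)) (u' p) := by
    change trace F e _ u π = trace F e _ u' π
    rw [htrace hu huH, htrace hu' hu'H]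
  rw [show u ∘ q = u' ∘ q from funext fun j => hagree _ (hqp j)] at hu_ne huu'
  exact hne (eq_of_optionCode_eq _ huu' hu_ne)

end Trace

theorem MInA_of_partitionOmegaFin {κ γ : Cardinal.{u}} (hγ : ℵ₀ ≤ γ)
    (hpart : PartitionOmegaFin κ γ) : MInA κ γ := by
  intro F hF
  have : Infinite γ.out := Cardinal.infinite_iff.2 (by rwa [Cardinal.mk_out])
  have e : ∀ i y, (F i).2 y ↪ γ.out := fun i y =>
    Classical.choice ((Cardinal.le_def _ _).1 ((hF i y).le.trans_eq (Cardinal.mk_out γ).symm))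
  have emb : ∀ m, (Pattern F m → Option γ.out) ↪ γ.out := fun m =>
    (nonempty_finite_arrow_option_embedding _ _).some
  obtain ⟨H, hHc, hHi, hhom⟩ := hpart (traceColouring F e emb)
  exact ⟨H, hHc, hHi, IsHomogeneous.mutuallyIndep hhom hHi⟩

theorem stmt19_general (κ γ : Cardinal.{u}) (hγ : ℵ₀ ≤ γ) :
    (PartitionOmegaFin κ γ → MInA κ γ) ∧
    ((∀ δ : Cardinal.{u}, δ < κ → PartitionOmegaFin κ δ) → StronglyMInA κ) :=
  ⟨MInA_of_partitionOmegaFin hγ, fun hall δ hδ hδκ => MInA_of_partitionOmegaFin hδ (hall δ hδκ)⟩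

/-- For infinite `κ` and `γ`: if `κ → (ω)^{<ω}_γ` then `κ` has the `γ`-MInA; in particular, if
`κ → (ω)^{<ω}_δ` holds for every `δ < κ` then `κ` is strongly MInA. -/
theorem stmt19 (κ γ : Cardinal.{u}) (hκ : ℵ₀ ≤ κ) (hγ : ℵ₀ ≤ γ) :
    (PartitionOmegaFin κ γ → MInA κ γ) ∧
    ((∀ δ : Cardinal.{u}, δ < κ → PartitionOmegaFin κ δ) → StronglyMInA κ) :=
  stmt19_general κ γ hγ
end
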